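/- arXiv:hep-th/9409058 — 5 statements merged into one kernel-verified Lean document; each statement's English description precedes it below -/
import Mathlib

section
/- Let R be an n⁴ complex array obeying the quantum Yang–Baxter equation. Then for every m ≥ 1 the opposite braided factorial equals the braided factorial: [m;R]^{op}! = [m;R]! as matrices on (ℂⁿ)^{⊗m}. -/
open scoped ComplexConjugate

noncomputable section

/-- An n⁴ array `R^i{}_j{}^k{}_l` viewed as an n²×n² matrix with row index `(i,k)`,
column index `(j,l)`. -/
def toMat (n : ℕ) (R : Fin n → Fin n → Fin n → Fin n → ℂ) :
    Matrix (Fin n × Fin n) (Fin n × Fin n) ℂ :=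
  Matrix.of fun p q => R p.1 q.1 p.2 q.2

/-- Entries `(R⁻¹)^i{}_j{}^k{}_l` of the matrix inverse of `R`. -/
def invEntry (n : ℕ) (R : Fin n → Fin n → Fin n → Fin n → ℂ)
    (i j k l : Fin n) : ℂ :=
  (toMat n R)⁻¹ (i, k) (j, l)

/-- `R` is of real type I: `conj (R^i{}_j{}^k{}_l) = R^l{}_k{}^j{}_i`. -/
def RealTypeI (n : ℕ) (R : Fin n → Fin n → Fin n → Fin n → ℂ) : Prop :=
  ∀ i j k l, conj (R i j k l) = R l k j i

/-- `R` is of antireal type I: `R` invertible and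
`conj (R^i{}_j{}^k{}_l) = (R⁻¹)^j{}_i{}^l{}_k`. -/
def AntirealTypeI (n : ℕ) (R : Fin n → Fin n → Fin n → Fin n → ℂ) : Prop :=
  IsUnit (toMat n R) ∧ ∀ i j k l, conj (R i j k l) = invEntry n R j i l k

/-- `R` is of real type II w.r.t. the involution `σ`:
`conj (R^i{}_j{}^k{}_l) = R^{σk}{}_{σl}{}^{σi}{}_{σj}`. -/
def RealTypeII (n : ℕ) (R : Fin n → Fin n → Fin n → Fin n → ℂ)
    (σ : Fin n → Fin n) : Prop :=
  ∀ i j k l, conj (R i j k l) = R (σ k) (σ l) (σ i) (σ j)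

/-- `R` is of antireal type II w.r.t. the involution `σ`: `R` invertible and
`conj (R^i{}_j{}^k{}_l) = (R⁻¹)^{σi}{}_{σj}{}^{σk}{}_{σl}`. -/
def AntirealTypeII (n : ℕ) (R : Fin n → Fin n → Fin n → Fin n → ℂ)
    (σ : Fin n → Fin n) : Prop :=
  IsUnit (toMat n R) ∧
    ∀ i j k l, conj (R i j k l) = invEntry n R (σ i) (σ j) (σ k) (σ l)

/-- The metric `η` (entries `η^{ij} = η i j`) is `R`-covariant:
`Σ η^{ia} η^{jb} R^k{}_a{}^l{}_b = Σ R^i{}_a{}^j{}_b η^{ak} η^{bl}`. -/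
def MetricCovariant (n : ℕ) (R : Fin n → Fin n → Fin n → Fin n → ℂ)
    (η : Matrix (Fin n) (Fin n) ℂ) : Prop :=
  ∀ i j k l, (∑ a : Fin n, ∑ b : Fin n, η i a * η j b * R k a l b) =
    ∑ a : Fin n, ∑ b : Fin n, R i a j b * η a k * η b l

/-- The metric `η` is real: `conj (η^{ij}) = η_{ji}`, where the lower-index entries
`η_{ij}` are those of the transposed inverse, i.e. `η_{ji} = (η⁻¹) i j`. -/
def MetricReal (n : ℕ) (η : Matrix (Fin n) (Fin n) ℂ) : Prop :=
  ∀ i j, conj (η i j) = η⁻¹ i j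

/-- The matrix `PR` on ℂⁿ⊗ℂⁿ: `(PR)^i{}_j{}^k{}_l = R^k{}_j{}^i{}_l`. -/
def PRmat (n : ℕ) (R : Fin n → Fin n → Fin n → Fin n → ℂ) :
    Matrix (Fin n × Fin n) (Fin n × Fin n) ℂ :=
  Matrix.of fun p q => R p.2 q.1 p.1 q.2

/-- The matrix `A_{k+1,k+2}` on `(ℂⁿ)^{⊗m}` acting as the two-site matrix `A` in the
(0-indexed) tensor factors `k, k+1` and as the identity elsewhere (the identity
matrix if `k+1 ≥ m`). -/
def site (n m : ℕ) (A : Matrix (Fin n × Fin n) (Fin n × Fin n) ℂ) (k : ℕ) :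
    Matrix (Fin m → Fin n) (Fin m → Fin n) ℂ :=
  if h : k + 1 < m then
    Matrix.of fun f g =>
      A (f ⟨k, Nat.lt_of_succ_lt h⟩, f ⟨k + 1, h⟩)
        (g ⟨k, Nat.lt_of_succ_lt h⟩, g ⟨k + 1, h⟩) *
      ∏ t : Fin m,
        (if t.1 = k ∨ t.1 = k + 1 then (1 : ℂ) else if f t = g t then 1 else 0)
  else 1

/-- The ordered product `A_{off+1,off+2} A_{off+2,off+3} ⋯ A_{off+r,off+r+1}`
(1-indexed tensor positions) on `(ℂⁿ)^{⊗m}`; the identity for `r = 0`. -/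
def chain (n m : ℕ) (A : Matrix (Fin n × Fin n) (Fin n × Fin n) ℂ)
    (off r : ℕ) : Matrix (Fin m → Fin n) (Fin m → Fin n) ℂ :=
  ((List.range r).map fun s => site n m A (off + s)).prod

/-- The reversed ordered product `A_{off+r,off+r+1} ⋯ A_{off+2,off+3} A_{off+1,off+2}`
on `(ℂⁿ)^{⊗m}`; the identity for `r = 0`. -/
def chainOp (n m : ℕ) (A : Matrix (Fin n × Fin n) (Fin n × Fin n) ℂ)
    (off r : ℕ) : Matrix (Fin m → Fin n) (Fin m → Fin n) ℂ :=
  (((List.range r).reverse).map fun s => site n m A (off + s)).prod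

/-- The braided integer `[k;R]` acting in the tensor factors `off+1,…,off+k`
(1-indexed) of `(ℂⁿ)^{⊗m}`:
`[k;R] = Σ_{r=0}^{k−1} (PR)_{12}(PR)_{23}⋯(PR)_{r,r+1}` (shifted by `off`). -/
def braidedInt (n m : ℕ) (R : Fin n → Fin n → Fin n → Fin n → ℂ)
    (off k : ℕ) : Matrix (Fin m → Fin n) (Fin m → Fin n) ℂ :=
  ∑ r ∈ Finset.range k, chain n m (PRmat n R) off r

/-- The opposite braided integer `[k;R]^{op}` acting in the tensor factors
`off+1,…,off+k` of `(ℂⁿ)^{⊗m}`: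
`[k;R]^{op} = Σ_{r=0}^{k−1} (PR)_{r,r+1}⋯(PR)_{23}(PR)_{12}` (shifted by `off`). -/
def braidedIntOp (n m : ℕ) (R : Fin n → Fin n → Fin n → Fin n → ℂ)
    (off k : ℕ) : Matrix (Fin m → Fin n) (Fin m → Fin n) ℂ :=
  ∑ r ∈ Finset.range k, chainOp n m (PRmat n R) off r

/-- The braided factorial `[m;R]! = [2;R]_{m−1,m} [3;R]_{m−2,…,m} ⋯ [m;R]_{1,…,m}`
on `(ℂⁿ)^{⊗m}`. -/
def braidedFact (n m : ℕ) (R : Fin n → Fin n → Fin n → Fin n → ℂ) :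
    Matrix (Fin m → Fin n) (Fin m → Fin n) ℂ :=
  ((List.range (m - 1)).map fun t => braidedInt n m R (m - (t + 2)) (t + 2)).prod

/-- The opposite braided factorial
`[m;R]^{op}! = [m;R]^{op}_{1,…,m} ⋯ [3;R]^{op}_{m−2,…,m} [2;R]^{op}_{m−1,m}`. -/
def braidedFactOp (n m : ℕ) (R : Fin n → Fin n → Fin n → Fin n → ℂ) :
    Matrix (Fin m → Fin n) (Fin m → Fin n) ℂ :=
  (((List.range (m - 1)).reverse).map fun t =>
    braidedIntOp n m R (m - (t + 2)) (t + 2)).prod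

/-- `R₁₂` on ℂⁿ⊗ℂⁿ⊗ℂⁿ. -/
def Rmat12 (n : ℕ) (R : Fin n → Fin n → Fin n → Fin n → ℂ) :
    Matrix (Fin n × Fin n × Fin n) (Fin n × Fin n × Fin n) ℂ :=
  Matrix.of fun p q =>
    R p.1 q.1 p.2.1 q.2.1 * (if p.2.2 = q.2.2 then 1 else 0)

/-- `R₁₃` on ℂⁿ⊗ℂⁿ⊗ℂⁿ. -/
def Rmat13 (n : ℕ) (R : Fin n → Fin n → Fin n → Fin n → ℂ) :
    Matrix (Fin n × Fin n × Fin n) (Fin n × Fin n × Fin n) ℂ :=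
  Matrix.of fun p q =>
    R p.1 q.1 p.2.2 q.2.2 * (if p.2.1 = q.2.1 then 1 else 0)

/-- `R₂₃` on ℂⁿ⊗ℂⁿ⊗ℂⁿ. -/
def Rmat23 (n : ℕ) (R : Fin n → Fin n → Fin n → Fin n → ℂ) :
    Matrix (Fin n × Fin n × Fin n) (Fin n × Fin n × Fin n) ℂ :=
  Matrix.of fun p q =>
    (if p.1 = q.1 then (1 : ℂ) else 0) * R p.2.1 q.2.1 p.2.2 q.2.2

/-- The quantum Yang–Baxter equation `R₁₂R₁₃R₂₃ = R₂₃R₁₃R₁₂`. -/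
def QYBE (n : ℕ) (R : Fin n → Fin n → Fin n → Fin n → ℂ) : Prop :=
  Rmat12 n R * Rmat13 n R * Rmat23 n R = Rmat23 n R * Rmat13 n R * Rmat12 n R

/-- The array `R₂₁`, with `R₂₁^i{}_j{}^k{}_l = R^k{}_l{}^i{}_j`. -/
def swapR (n : ℕ) (R : Fin n → Fin n → Fin n → Fin n → ℂ) :
    Fin n → Fin n → Fin n → Fin n → ℂ :=
  fun i j k l => R k l i j

section Aux

variable {n m : ℕ}

lemma site_one_of_ge (A : Matrix (Fin n × Fin n) (Fin n × Fin n) ℂ) (k : ℕ)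
    (h : ¬ k + 1 < m) : site n m A k = 1 := dif_neg h

lemma site_mul_site (A A' : Matrix (Fin n × Fin n) (Fin n × Fin n) ℂ)
    {k l : ℕ} (hkl : k + 2 ≤ l ∨ l + 2 ≤ k) (hk : k + 1 < m) (hl : l + 1 < m) :
    site n m A k * site n m A' l =
      Matrix.of fun f h =>
        A (f ⟨k, by omega⟩, f ⟨k + 1, hk⟩) (h ⟨k, by omega⟩, h ⟨k + 1, hk⟩) *
        A' (f ⟨l, by omega⟩, f ⟨l + 1, hl⟩) (h ⟨l, by omega⟩, h ⟨l + 1, hl⟩) *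
        ∏ t : Fin m,
          (if t.1 = k ∨ t.1 = k + 1 ∨ t.1 = l ∨ t.1 = l + 1 then (1 : ℂ)
            else if f t = h t then 1 else 0) := by
  ext f h
  rw [Matrix.mul_apply]
  simp only [site, dif_pos hk, dif_pos hl, Matrix.of_apply]
  set g₀ : Fin m → Fin n := fun t => if t.1 = k ∨ t.1 = k + 1 then h t else f t with hg₀
  have hg₀k : ∀ (t : Fin m), (t.1 = k ∨ t.1 = k + 1) → g₀ t = h t := by
    intro t ht; simp only [hg₀, if_pos ht]
  have hg₀l : ∀ (t : Fin m), ¬(t.1 = k ∨ t.1 = k + 1) → g₀ t = f t := by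
    intro t ht; simp only [hg₀, if_neg ht]
  rw [Finset.sum_eq_single_of_mem g₀ (Finset.mem_univ _)]
  · rw [hg₀k ⟨k, by omega⟩ (Or.inl rfl), hg₀k ⟨k + 1, hk⟩ (Or.inr rfl),
      hg₀l ⟨l, by omega⟩ (by simp only [not_or]; omega),
      hg₀l ⟨l + 1, hl⟩ (by simp only [not_or]; omega)]
    have h1 : (∏ t : Fin m,
        (if t.1 = k ∨ t.1 = k + 1 then (1 : ℂ) else if f t = g₀ t then 1 else 0)) = 1 := by
      refine Finset.prod_eq_one fun t _ => ?_
      by_cases ht : t.1 = k ∨ t.1 = k + 1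
      · rw [if_pos ht]
      · rw [if_neg ht, hg₀l t ht, if_pos rfl]
    have h2 : (∏ t : Fin m,
        (if t.1 = l ∨ t.1 = l + 1 then (1 : ℂ) else if g₀ t = h t then 1 else 0)) =
        ∏ t : Fin m,
          (if t.1 = k ∨ t.1 = k + 1 ∨ t.1 = l ∨ t.1 = l + 1 then (1 : ℂ)
            else if f t = h t then 1 else 0) := by
      refine Finset.prod_congr rfl fun t _ => ?_
      by_cases htk : t.1 = k ∨ t.1 = k + 1
      · have htl : ¬(t.1 = l ∨ t.1 = l + 1) := by omega
        have hb : t.1 = k ∨ t.1 = k + 1 ∨ t.1 = l ∨ t.1 = l + 1 := by tauto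
        rw [if_neg htl, if_pos hb, hg₀k t htk, if_pos rfl]
      · by_cases htl : t.1 = l ∨ t.1 = l + 1
        · have hb : t.1 = k ∨ t.1 = k + 1 ∨ t.1 = l ∨ t.1 = l + 1 := by tauto
          rw [if_pos htl, if_pos hb]
        · have hb : ¬(t.1 = k ∨ t.1 = k + 1 ∨ t.1 = l ∨ t.1 = l + 1) := by tauto
          rw [if_neg htl, if_neg hb, hg₀l t htk]
    rw [h1, h2]
    ring
  · intro g _ hg
    obtain ⟨t, ht⟩ := Function.ne_iff.mp hg
    by_cases htk : t.1 = k ∨ t.1 = k + 1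
    · have htl : ¬(t.1 = l ∨ t.1 = l + 1) := by omega
      have : (∏ t : Fin m,
          (if t.1 = l ∨ t.1 = l + 1 then (1 : ℂ) else if g t = h t then 1 else 0)) = 0 := by
        refine Finset.prod_eq_zero (Finset.mem_univ t) ?_
        rw [if_neg htl, if_neg (by rw [← hg₀k t htk]; exact ht)]
      rw [this]; ring
    · have : (∏ t : Fin m,
          (if t.1 = k ∨ t.1 = k + 1 then (1 : ℂ) else if f t = g t then 1 else 0)) = 0 := by
        refine Finset.prod_eq_zero (Finset.mem_univ t) ?_
        rw [if_neg htk, if_neg (by rw [← hg₀l t htk]; exact fun hfg => ht hfg.symm)]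
      rw [this]; ring

lemma site_comm (A A' : Matrix (Fin n × Fin n) (Fin n × Fin n) ℂ)
    {k l : ℕ} (hkl : k + 2 ≤ l) :
    site n m A k * site n m A' l = site n m A' l * site n m A k := by
  by_cases hl : l + 1 < m
  · have hk : k + 1 < m := by omega
    rw [site_mul_site A A' (Or.inl hkl) hk hl, site_mul_site A' A (Or.inr hkl) hl hk]
    ext f h
    simp only [Matrix.of_apply]
    have hp : (∏ t : Fin m,
        (if t.1 = l ∨ t.1 = l + 1 ∨ t.1 = k ∨ t.1 = k + 1 then (1 : ℂ)
          else if f t = h t then 1 else 0)) =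
        ∏ t : Fin m,
          (if t.1 = k ∨ t.1 = k + 1 ∨ t.1 = l ∨ t.1 = l + 1 then (1 : ℂ)
            else if f t = h t then 1 else 0) := by
      refine Finset.prod_congr rfl fun t _ => ?_
      exact if_congr (by tauto) rfl rfl
    rw [hp]; ring
  · rw [site_one_of_ge A' l hl, mul_one, one_mul]

lemma chain_zero (A : Matrix (Fin n × Fin n) (Fin n × Fin n) ℂ) (off : ℕ) :
    chain n m A off 0 = 1 := by simp [chain]

lemma chain_succ (A : Matrix (Fin n × Fin n) (Fin n × Fin n) ℂ) (off r : ℕ) :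
    chain n m A off (r + 1) = site n m A off * chain n m A (off + 1) r := by
  unfold chain
  rw [List.range_succ_eq_map, List.map_cons, List.prod_cons, List.map_map]
  congr 1
  refine congrArg List.prod (List.map_congr_left fun s _ => ?_)
  simp only [Function.comp_apply]
  rw [show off + s.succ = off + 1 + s from by omega]

lemma chainOp_zero (A : Matrix (Fin n × Fin n) (Fin n × Fin n) ℂ) (off : ℕ) :
    chainOp n m A off 0 = 1 := by simp [chainOp]

lemma chainOp_succ (A : Matrix (Fin n × Fin n) (Fin n × Fin n) ℂ) (off r : ℕ) :
    chainOp n m A off (r + 1) = chainOp n m A (off + 1) r * site n m A off := by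
  unfold chainOp
  rw [List.range_succ_eq_map, List.reverse_cons, List.map_append, List.prod_append,
    ← List.map_reverse, List.map_map]
  simp only [List.map_cons, List.map_nil, List.prod_cons, List.prod_nil, mul_one]
  congr 1
  refine congrArg List.prod (List.map_congr_left fun s _ => ?_)
  simp only [Function.comp_apply]
  rw [show off + s.succ = off + 1 + s from by omega]

variable (R : Fin n → Fin n → Fin n → Fin n → ℂ)

lemma braidedInt_one (off : ℕ) : braidedInt n m R off 1 = 1 := by
  simp [braidedInt, chain]

lemma braidedIntOp_one (off : ℕ) : braidedIntOp n m R off 1 = 1 := by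
  simp [braidedIntOp, chainOp]

lemma braidedInt_succ (off k : ℕ) :
    braidedInt n m R off (k + 1) =
      1 + site n m (PRmat n R) off * braidedInt n m R (off + 1) k := by
  unfold braidedInt
  rw [Finset.sum_range_succ']
  simp only [chain_succ, chain_zero]
  rw [← Finset.mul_sum, add_comm]

lemma braidedIntOp_succ (off k : ℕ) :
    braidedIntOp n m R off (k + 1) =
      1 + braidedIntOp n m R (off + 1) k * site n m (PRmat n R) off := by
  unfold braidedIntOp
  rw [Finset.sum_range_succ']
  simp only [chainOp_succ, chainOp_zero]
  rw [← Finset.sum_mul, add_comm]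

lemma site_comm_chain (A A' : Matrix (Fin n × Fin n) (Fin n × Fin n) ℂ)
    {off : ℕ} (r : ℕ) : ∀ l, off + 2 ≤ l →
    site n m A off * chain n m A' l r = chain n m A' l r * site n m A off := by
  induction r with
  | zero => intro l _; simp [chain_zero]
  | succ r ih =>
      intro l hl
      rw [chain_succ, ← mul_assoc, site_comm A A' hl, mul_assoc, ih (l + 1) (by omega),
        ← mul_assoc]

lemma site_comm_int (A : Matrix (Fin n × Fin n) (Fin n × Fin n) ℂ)
    {off l : ℕ} (hl : off + 2 ≤ l) (k : ℕ) :
    site n m A off * braidedInt n m R l k = braidedInt n m R l k * site n m A off := by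
  unfold braidedInt
  rw [Finset.mul_sum, Finset.sum_mul]
  exact Finset.sum_congr rfl fun r _ => site_comm_chain A _ r l hl

end Aux

/-- Recursive version of the braided factorial at offset `off`. -/
def gFact (n m : ℕ) (R : Fin n → Fin n → Fin n → Fin n → ℂ) :
    ℕ → ℕ → Matrix (Fin m → Fin n) (Fin m → Fin n) ℂ
  | 0, _ => 1
  | k + 1, off => gFact n m R k (off + 1) * braidedInt n m R off (k + 1)

/-- Recursive version of the opposite braided factorial at offset `off`. -/
def gFactOp (n m : ℕ) (R : Fin n → Fin n → Fin n → Fin n → ℂ) :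
    ℕ → ℕ → Matrix (Fin m → Fin n) (Fin m → Fin n) ℂ
  | 0, _ => 1
  | k + 1, off => braidedIntOp n m R off (k + 1) * gFactOp n m R k (off + 1)

lemma gFact_succ {n m : ℕ} (R : Fin n → Fin n → Fin n → Fin n → ℂ) (k off : ℕ) :
    gFact n m R (k + 1) off =
      gFact n m R k (off + 1) * braidedInt n m R off (k + 1) := rfl

lemma gFactOp_succ {n m : ℕ} (R : Fin n → Fin n → Fin n → Fin n → ℂ) (k off : ℕ) :
    gFactOp n m R (k + 1) off =
      braidedIntOp n m R off (k + 1) * gFactOp n m R k (off + 1) := rfl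

section Main

variable {n m : ℕ} (R : Fin n → Fin n → Fin n → Fin n → ℂ)

lemma site_comm_gFact (A : Matrix (Fin n × Fin n) (Fin n × Fin n) ℂ)
    {off : ℕ} (k : ℕ) : ∀ l, off + 2 ≤ l →
    site n m A off * gFact n m R k l = gFact n m R k l * site n m A off := by
  induction k with
  | zero => intro l _; simp [gFact]
  | succ k ih =>
      intro l hl
      rw [gFact_succ, ← mul_assoc, ih (l + 1) (by omega), mul_assoc,
        site_comm_int R A hl, ← mul_assoc]

lemma key_comm (k : ℕ) : ∀ off,
    braidedIntOp n m R off (k + 1) * gFact n m R k (off + 1) =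
      gFact n m R k (off + 1) * braidedInt n m R off (k + 1) := by
  induction k with
  | zero => intro off; simp [gFact, braidedIntOp_one, braidedInt_one]
  | succ k ih =>
      intro off
      rw [braidedIntOp_succ, braidedInt_succ, gFact_succ]
      set Bop := braidedIntOp n m R (off + 1) (k + 1)
      set S := site n m (PRmat n R) off
      set G := gFact n m R k (off + 2)
      set I := braidedInt n m R (off + 1) (k + 1)
      have h1 : S * G = G * S := site_comm_gFact R _ k (off + 2) (by omega)
      have h2 : Bop * G = G * I := ih (off + 1)
      rw [add_mul, one_mul, mul_add, mul_one]
      congr 1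
      rw [mul_assoc Bop S (G * I), ← mul_assoc S G I, h1, mul_assoc G S I,
        ← mul_assoc Bop G (S * I), h2, mul_assoc]

lemma gFactOp_eq_gFact (k : ℕ) : ∀ off, gFactOp n m R k off = gFact n m R k off := by
  induction k with
  | zero => intro off; rfl
  | succ k ih =>
      intro off
      rw [gFactOp_succ, ih (off + 1), key_comm R k off, gFact_succ]

lemma gFact_eq_list (k : ℕ) : ∀ off, gFact n m R (k + 1) off =
    ((List.range k).map fun t => braidedInt n m R (off + (k + 1 - (t + 2))) (t + 2)).prod := by
  induction k with
  | zero => intro off; simp [gFact, braidedInt_one]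
  | succ k ih =>
      intro off
      rw [gFact_succ, ih (off + 1), List.range_succ, List.map_append, List.prod_append]
      congr 1
      · refine congrArg List.prod (List.map_congr_left fun t ht => ?_)
        rw [List.mem_range] at ht
        have h : off + 1 + (k + 1 - (t + 2)) = off + (k + 1 + 1 - (t + 2)) := by omega
        rw [h]
      · simp [show k + 1 + 1 - (k + 2) = 0 from by omega]

lemma gFactOp_eq_list (k : ℕ) : ∀ off, gFactOp n m R (k + 1) off =
    (((List.range k).reverse).map fun t =>
      braidedIntOp n m R (off + (k + 1 - (t + 2))) (t + 2)).prod := by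
  induction k with
  | zero => intro off; simp [gFactOp, braidedIntOp_one]
  | succ k ih =>
      intro off
      rw [gFactOp_succ, ih (off + 1), List.range_succ, List.reverse_append,
        List.reverse_singleton, List.singleton_append, List.map_cons, List.prod_cons]
      congr 1
      · simp [show k + 1 + 1 - (k + 2) = 0 from by omega]
      · refine congrArg List.prod (List.map_congr_left fun t ht => ?_)
        rw [List.mem_reverse, List.mem_range] at ht
        have h : off + 1 + (k + 1 - (t + 2)) = off + (k + 1 + 1 - (t + 2)) := by omega
        rw [h]

/-- if `R` obeys the QYBE, then for every `m ≥ 1` the opposite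
braided factorial equals the braided factorial: `[m;R]^{op}! = [m;R]!`. -/
theorem stmt10 (n : ℕ) (hn : 1 ≤ n)
    (R : Fin n → Fin n → Fin n → Fin n → ℂ) (hR : QYBE n R)
    (m : ℕ) (hm : 1 ≤ m) :
    braidedFactOp n m R = braidedFact n m R := by
  obtain ⟨k, rfl⟩ : ∃ k, m = k + 1 := ⟨m - 1, by omega⟩
  have h1 : braidedFact n (k + 1) R = gFact n (k + 1) R (k + 1) 0 := by
    rw [gFact_eq_list]
    unfold braidedFact
    simp only [Nat.add_sub_cancel, zero_add]
  have h2 : braidedFactOp n (k + 1) R = gFactOp n (k + 1) R (k + 1) 0 := by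
    rw [gFactOp_eq_list]
    unfold braidedFactOp
    simp only [Nat.add_sub_cancel, zero_add]
  rw [h1, h2, gFactOp_eq_gFact]
end Main
end
end

section
/- Let R be an n⁴ complex array obeying the quantum Yang–Baxter equation. Then for every m ≥ 1 and all multi-indices, ([m;R]!)^{j_1⋯j_m}_{i_1⋯i_m} = ([m;R₂₁]!)^{j_m⋯j_1}_{i_m⋯i_1}, i.e. the braided factorial of R equals the braided factorial of R₂₁ with both multi-indices reversed. -/
open scoped ComplexConjugate

noncomputable section

/-! Write `Bₖ` for `PR` acting in the tensor factors `k, k+1` (0-indexed). The QYBE is exactly the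
braid relation `Bₖ Bₖ₊₁ Bₖ = Bₖ₊₁ Bₖ Bₖ₊₁`, and `Bₖ`, `Bₗ` commute for `|k - l| ≥ 2`. Reversing the
tensor factors turns `PR₂₁` in the factors `k, k+1` into `B_{m-2-k}`, so the reversed `[m;R₂₁]!` is
a product of descending braided integers `Σᵣ Bₜ Bₜ₋₁ ⋯ Bₜ₋ᵣ₊₁`, while `[m;R]!` is a product of
ascending ones. The two products agree for any elements of a semiring satisfying these relations:
a descending braided integer passes through an ascending one at the cost of relabelling the terms
of the double sum, each term either commuting outright or being shifted by one index through the
braid relations. -/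

section Monoid

variable {M : Type*} [Monoid M] (B : ℕ → M)

def ascProd (a r : ℕ) : M := ((List.range r).map fun s => B (a + s)).prod

def descProd (c r : ℕ) : M := ((List.range r).reverse.map fun s => B (c + s)).prod

@[simp] lemma ascProd_zero (a : ℕ) : ascProd B a 0 = 1 := rfl

@[simp] lemma descProd_zero (c : ℕ) : descProd B c 0 = 1 := rfl

lemma ascProd_succ (a r : ℕ) : ascProd B a (r + 1) = ascProd B a r * B (a + r) := by
  simp [ascProd, List.range_succ]

lemma ascProd_add (a r s : ℕ) :
    ascProd B a (r + s) = ascProd B a r * ascProd B (a + r) s := by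
  simp [ascProd, List.range_add, Function.comp_def, Nat.add_assoc]

lemma ascProd_succ' (a r : ℕ) : ascProd B a (r + 1) = B a * ascProd B (a + 1) r := by
  rw [Nat.add_comm r, ascProd_add]
  simp [ascProd]

lemma descProd_succ (c r : ℕ) : descProd B c (r + 1) = B (c + r) * descProd B c r := by
  simp [descProd, List.range_succ]

lemma descProd_succ' (c r : ℕ) : descProd B c (r + 1) = descProd B (c + 1) r * B c := by
  simp [descProd, List.range_succ_eq_map, Function.comp_def, Nat.add_assoc, Nat.add_comm 1]

variable {B}

lemma map_ascProd {M' F : Type*} [Monoid M'] [FunLike F M M'] [MonoidHomClass F M M'] (φ : F)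
    (a r : ℕ) : φ (ascProd B a r) = ascProd (φ ∘ B) a r := by
  simp [ascProd, map_list_prod, Function.comp_def]

lemma ascProd_eq_descProd {B' : ℕ → M} {a c r : ℕ}
    (h : ∀ s < r, B' (a + s) = B (c + (r - 1 - s))) : ascProd B' a r = descProd B c r := by
  induction r generalizing a with
  | zero => rfl
  | succ r ih =>
    rw [ascProd_succ', descProd_succ, ih fun s hs => ?_]
    · congr 1
      simpa using h 0 (by omega)
    · convert h (s + 1) (by omega) using 2 <;> omega

section FarCommute

variable (hc : ∀ k l, k + 2 ≤ l → Commute (B k) (B l))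
include hc

lemma commute_descProd {j c : ℕ} (h : j + 2 ≤ c) (r : ℕ) : Commute (B j) (descProd B c r) :=
  Commute.list_prod_right _ _ <| by
    simp only [List.mem_map, List.mem_reverse, List.mem_range]
    rintro _ ⟨s, -, rfl⟩
    exact hc _ _ (by omega)

lemma ascProd_commute_descProd {a r c : ℕ} (h : a + r + 1 ≤ c) (q : ℕ) :
    Commute (ascProd B a r) (descProd B c q) :=
  Commute.list_prod_left _ _ <| by
    simp only [List.mem_map, List.mem_range]
    rintro _ ⟨s, hs, rfl⟩
    exact commute_descProd hc (by omega) q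

end FarCommute

section Braid

variable {W : ℕ} (hbr : ∀ k, k + 1 ≤ W → B k * B (k + 1) * B k = B (k + 1) * B k * B (k + 1))
  (hc : ∀ k l, k + 2 ≤ l → Commute (B k) (B l))
include hbr hc

lemma descProd_mul_succ {c r j : ℕ} (hcj : c ≤ j) (hjr : j + 2 ≤ c + r) (hrW : c + r ≤ W + 1) :
    descProd B c r * B (j + 1) = B j * descProd B c r := by
  induction r generalizing c with
  | zero => omega
  | succ r ih =>
    rcases hcj.eq_or_lt with rfl | hlt
    · obtain ⟨r, rfl⟩ : ∃ r', r = r' + 1 := ⟨r - 1, by omega⟩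
      rw [descProd_succ', descProd_succ']
      calc descProd B (c + 2) r * B (c + 1) * B c * B (c + 1)
          = descProd B (c + 2) r * (B c * B (c + 1) * B c) := by
            rw [hbr c (by omega)]; simp only [mul_assoc]
        _ = B c * descProd B (c + 2) r * (B (c + 1) * B c) := by
            rw [(commute_descProd hc le_rfl r).eq]; simp only [mul_assoc]
        _ = B c * (descProd B (c + 2) r * B (c + 1) * B c) := by simp only [mul_assoc]
    · rw [descProd_succ', mul_assoc, (hc c (j + 1) (by omega)).eq, ← mul_assoc,
        ih (by omega) (by omega) (by omega), mul_assoc]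

lemma descProd_mul_ascProd {c r t : ℕ} (htr : t + 1 ≤ r) (hrW : c + r ≤ W + 1) :
    descProd B c r * ascProd B (c + 1) t = ascProd B c t * descProd B c r := by
  induction t with
  | zero => simp
  | succ t ih =>
    rw [ascProd_succ, ← mul_assoc, ih (by omega), mul_assoc, show c + 1 + t = c + t + 1 by omega,
      descProd_mul_succ hbr hc (by omega) (by omega) hrW, ← mul_assoc, ← ascProd_succ]

lemma descProd_mul_ascProd_of_overlap {a e p q : ℕ} (hpq : p ≤ q) (hW : a + e + q ≤ W) :
    descProd B (a + e + 1) q * ascProd B a (e + 1 + p) =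
      ascProd B a (e + p) * descProd B (a + e) (q + 1) := by
  have hsplit :
      ascProd B a (e + 1 + p) = ascProd B a e * (B (a + e) * ascProd B (a + e + 1) p) := by
    rw [Nat.add_assoc, ascProd_add, Nat.add_comm 1, ascProd_succ']
  rw [hsplit, ← mul_assoc, ← (ascProd_commute_descProd hc le_rfl q).eq, mul_assoc,
    ← mul_assoc _ (B _), ← descProd_succ', descProd_mul_ascProd hbr hc (by omega) (by omega),
    ← mul_assoc, ← ascProd_add]

end Braid

end Monoid

section Semiring

open Finset

variable {A : Type*} [Semiring A] (B : ℕ → A)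

def ascSum (a k : ℕ) : A := ∑ r ∈ range k, ascProd B a r

def descSum (top k : ℕ) : A := ∑ r ∈ range k, descProd B (top - r) r

def ascSumProd (N s d : ℕ) : A := ((List.range d).map fun t => ascSum B (N - t) (t + s)).prod

lemma ascSumProd_succ (N s d : ℕ) :
    ascSumProd B N s (d + 1) = ascSumProd B N s d * ascSum B (N - d) (d + s) :=
  List.prod_range_succ _ _

lemma ascSumProd_succ_one (N d : ℕ) : ascSumProd B (N + 1) 1 (d + 1) = ascSumProd B N 2 d := by
  simp [ascSumProd, List.prod_range_succ', ascSum]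

variable {B} {W : ℕ}
  (hbr : ∀ k, k + 1 ≤ W → B k * B (k + 1) * B k = B (k + 1) * B k * B (k + 1))
  (hc : ∀ k l, k + 2 ≤ l → Commute (B k) (B l))
include hbr hc

lemma descProd_mul_ascProd_eq_ite {a d x y : ℕ} (hx : x ≤ d) (hy : y ≤ d + 1) (hW : a + d ≤ W) :
    descProd B (a + d + 1 - x) x * ascProd B a y =
      if y + x ≤ d then ascProd B a y * descProd B (a + d + 1 - x) x
      else ascProd B a (y - 1) * descProd B (a + d + 1 - (x + 1)) (x + 1) := by
  split_ifs with h
  · exact (ascProd_commute_descProd hc (by omega) x).symm.eq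
  · obtain ⟨p, rfl⟩ : ∃ p, y = d - x + 1 + p := ⟨y - (d - x) - 1, by omega⟩
    rw [show a + d + 1 - x = a + (d - x) + 1 by omega,
      descProd_mul_ascProd_of_overlap hbr hc (by omega) (by omega),
      show d - x + 1 + p - 1 = d - x + p by omega, show a + d + 1 - (x + 1) = a + (d - x) by omega]

/-- The term `(x, y)` on the left (a descending word of length `x` followed by an ascending one of
length `y`) equals the term `(y, x)` on the right when the two words are far apart (`y + x ≤ d`),
and the term `(y - 1, x + 1)` otherwise, where the braid relations shift the descending word. -/
lemma descSum_mul_ascSum {a d : ℕ} (hW : a + d ≤ W) :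
    descSum B (a + d + 1) (d + 1) * ascSum B a (d + 2) =
      ascSum B a (d + 1) * descSum B (a + d + 1) (d + 2) := by
  simp only [descSum, ascSum, sum_mul_sum, ← sum_product']
  refine sum_nbij' (fun x => if x.2 + x.1 ≤ d then (x.2, x.1) else (x.2 - 1, x.1 + 1))
    (fun y => if y.1 + y.2 ≤ d then (y.2, y.1) else (y.2 - 1, y.1 + 1)) ?_ ?_ ?_ ?_ ?_
  all_goals simp only [mem_product, mem_range, Prod.forall]
  · intro x y _; split_ifs <;> simp <;> omega
  · intro x y _; split_ifs <;> simp <;> omega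
  · intro x y _; split_ifs <;> simp_all <;> omega
  · intro x y _; split_ifs <;> simp_all <;> omega
  · intro x y h
    rw [descProd_mul_ascProd_eq_ite hbr hc (by omega) (by omega) hW]
    split_ifs <;> rfl

lemma ascSumProd_eq_mul_descSum {d : ℕ} (hd : d ≤ W + 1) :
    ascSumProd B W 2 d = ascSumProd B W 1 d * descSum B (W + 1) (d + 1) := by
  induction d with
  | zero => simp [ascSumProd, descSum]
  | succ d ih =>
    have hmid := descSum_mul_ascSum hbr hc (a := W - d) (d := d) (by omega)
    rw [show W - d + d + 1 = W + 1 by omega] at hmid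
    rw [ascSumProd_succ, ih (by omega), mul_assoc, hmid, ← mul_assoc, ← ascSumProd_succ]

lemma ascSumProd_eq_prod_descSum :
    ascSumProd B W 2 (W + 1) =
      ((List.range (W + 1)).map fun t => descSum B (t + 1) (t + 2)).prod := by
  induction W with
  | zero => simp [ascSumProd, ascSum, descSum, Finset.sum_range_succ, descProd, ascProd]
  | succ W ih =>
    rw [ascSumProd_eq_mul_descSum hbr hc le_rfl, ascSumProd_succ_one,
      ih (fun k hk => hbr k (by omega)), List.prod_range_succ _ (W + 1)]

end Semiring

section SiteMatrix

variable {n m : ℕ}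

def AgreeOff (S : Finset ℕ) (f g : Fin m → Fin n) : Prop :=
  ∀ t : Fin m, (t : ℕ) ∉ S → f t = g t

instance (S : Finset ℕ) (f g : Fin m → Fin n) : Decidable (AgreeOff S f g) :=
  Fintype.decidableForallFintype

lemma agreeOff_comm {S : Finset ℕ} {f g : Fin m → Fin n} : AgreeOff S f g ↔ AgreeOff S g f :=
  ⟨fun h t ht => (h t ht).symm, fun h t ht => (h t ht).symm⟩

def updatePair (k : ℕ) (hk : k + 1 < m) (f : Fin m → Fin n) (p : Fin n × Fin n) :
    Fin m → Fin n :=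
  Function.update (Function.update f ⟨k, by omega⟩ p.1) ⟨k + 1, hk⟩ p.2

section UpdatePair

variable {k : ℕ} (hk : k + 1 < m) (f : Fin m → Fin n) (p : Fin n × Fin n)

@[simp] lemma updatePair_left : updatePair k hk f p ⟨k, by omega⟩ = p.1 := by
  simp [updatePair, Fin.ext_iff]

@[simp] lemma updatePair_right : updatePair k hk f p ⟨k + 1, hk⟩ = p.2 := by
  simp [updatePair]

lemma updatePair_of_ne {t : Fin m} (h₁ : (t : ℕ) ≠ k) (h₂ : (t : ℕ) ≠ k + 1) :
    updatePair k hk f p t = f t := by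
  rw [updatePair, Function.update_of_ne (by simpa [Fin.ext_iff] using h₂),
    Function.update_of_ne (by simpa [Fin.ext_iff] using h₁)]

lemma agreeOff_updatePair : AgreeOff {k, k + 1} f (updatePair k hk f p) := fun t ht => by
  simp only [Finset.mem_insert, Finset.mem_singleton, not_or] at ht
  exact (updatePair_of_ne hk f p ht.1 ht.2).symm

lemma updatePair_eq_of_agreeOff {g : Fin m → Fin n} (h : AgreeOff {k, k + 1} f g) :
    updatePair k hk f (g ⟨k, by omega⟩, g ⟨k + 1, hk⟩) = g := by
  funext t
  by_cases h₁ : (t : ℕ) = k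
  · rw [show t = ⟨k, by omega⟩ from Fin.ext h₁]
    exact updatePair_left hk f _
  by_cases h₂ : (t : ℕ) = k + 1
  · rw [show t = ⟨k + 1, hk⟩ from Fin.ext h₂]
    exact updatePair_right hk f _
  rw [updatePair_of_ne hk f _ h₁ h₂]
  exact h t (by simp [h₁, h₂])

lemma agreeOff_updatePair_iff (S : Finset ℕ) (g : Fin m → Fin n) :
    AgreeOff S (updatePair k hk f p) g ↔
      (k ∈ S ∨ p.1 = g ⟨k, by omega⟩) ∧ (k + 1 ∈ S ∨ p.2 = g ⟨k + 1, hk⟩) ∧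
        AgreeOff (S ∪ {k, k + 1}) f g := by
  refine ⟨fun h => ⟨?_, ?_, fun t ht => ?_⟩, fun ⟨h₁, h₂, h⟩ t ht => ?_⟩
  · exact or_iff_not_imp_left.2 fun hS => by simpa using h ⟨k, by omega⟩ hS
  · exact or_iff_not_imp_left.2 fun hS => by simpa using h ⟨k + 1, hk⟩ hS
  · simp only [Finset.mem_union, Finset.mem_insert, Finset.mem_singleton, not_or] at ht
    simpa [updatePair_of_ne hk f p ht.2.1 ht.2.2] using h t ht.1
  · by_cases hk₁ : (t : ℕ) = k
    · rw [show t = ⟨k, by omega⟩ from Fin.ext hk₁] at ht ⊢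
      simpa [ht] using h₁
    by_cases hk₂ : (t : ℕ) = k + 1
    · rw [show t = ⟨k + 1, hk⟩ from Fin.ext hk₂] at ht ⊢
      simpa [ht] using h₂
    rw [updatePair_of_ne hk f p hk₁ hk₂]
    exact h t (by simp [ht, hk₁, hk₂])

end UpdatePair

lemma site_apply (A : Matrix (Fin n × Fin n) (Fin n × Fin n) ℂ) {k : ℕ} (hk : k + 1 < m)
    (f g : Fin m → Fin n) :
    site n m A k f g = A (f ⟨k, by omega⟩, f ⟨k + 1, hk⟩) (g ⟨k, by omega⟩, g ⟨k + 1, hk⟩) *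
      if AgreeOff {k, k + 1} f g then 1 else 0 := by
  rw [site, dif_pos hk, Matrix.of_apply]
  congr 1
  simp_rw [← ite_or]
  have hcond : (∀ t : Fin m, ((t : ℕ) = k ∨ (t : ℕ) = k + 1) ∨ f t = g t) ↔
      AgreeOff {k, k + 1} f g := by
    simp [AgreeOff, or_iff_not_imp_left]
  exact Fintype.prod_boole.trans (by simp only [hcond])

lemma site_of_not_lt (A : Matrix (Fin n × Fin n) (Fin n × Fin n) ℂ) {k : ℕ} (hk : ¬k + 1 < m) :
    site n m A k = 1 :=
  dif_neg hk

lemma sum_agreeOff_eq_sum_updatePair {α : Type*} [AddCommMonoid α] {k : ℕ} (hk : k + 1 < m)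
    (f : Fin m → Fin n) (Φ : (Fin m → Fin n) → α) :
    ∑ h with AgreeOff {k, k + 1} f h, Φ h = ∑ p : Fin n × Fin n, Φ (updatePair k hk f p) := by
  refine Finset.sum_nbij' (fun h => (h ⟨k, by omega⟩, h ⟨k + 1, hk⟩)) (updatePair k hk f)
    (by simp) (fun p _ => by simpa using agreeOff_updatePair hk f p) (fun h hh => ?_)
    (fun p _ => by simp) (fun h hh => ?_)
  all_goals
    simp only [Finset.mem_filter, Finset.mem_univ, true_and] at hh
    simp only [updatePair_eq_of_agreeOff hk f hh]

lemma site_mul_apply (A : Matrix (Fin n × Fin n) (Fin n × Fin n) ℂ) {k : ℕ} (hk : k + 1 < m)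
    (X : Matrix (Fin m → Fin n) (Fin m → Fin n) ℂ) (f g : Fin m → Fin n) :
    (site n m A k * X) f g =
      ∑ p, A (f ⟨k, by omega⟩, f ⟨k + 1, hk⟩) p * X (updatePair k hk f p) g := by
  simp only [Matrix.mul_apply, site_apply A hk, mul_ite, ite_mul, mul_one, mul_zero, zero_mul,
    ← Finset.sum_filter, sum_agreeOff_eq_sum_updatePair hk, updatePair_left, updatePair_right]

lemma mul_site_apply (A : Matrix (Fin n × Fin n) (Fin n × Fin n) ℂ) {k : ℕ} (hk : k + 1 < m)
    (X : Matrix (Fin m → Fin n) (Fin m → Fin n) ℂ) (f g : Fin m → Fin n) :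
    (X * site n m A k) f g =
      ∑ p, X f (updatePair k hk g p) * A p (g ⟨k, by omega⟩, g ⟨k + 1, hk⟩) := by
  simp only [Matrix.mul_apply, site_apply A hk, mul_ite, mul_one, mul_zero, ← Finset.sum_filter,
    agreeOff_comm (g := g)]
  simp only [sum_agreeOff_eq_sum_updatePair hk, updatePair_left, updatePair_right]

lemma site_mul_site_apply (A A' : Matrix (Fin n × Fin n) (Fin n × Fin n) ℂ) {k l : ℕ}
    (hk : k + 1 < m) (hl : l + 1 < m) (hkl : k + 2 ≤ l ∨ l + 2 ≤ k) (f g : Fin m → Fin n) :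
    (site n m A k * site n m A' l) f g =
      A (f ⟨k, by omega⟩, f ⟨k + 1, hk⟩) (g ⟨k, by omega⟩, g ⟨k + 1, hk⟩) *
        A' (f ⟨l, by omega⟩, f ⟨l + 1, hl⟩) (g ⟨l, by omega⟩, g ⟨l + 1, hl⟩) *
          if AgreeOff ({l, l + 1} ∪ {k, k + 1}) f g then 1 else 0 := by
  have hk₁ : k ∉ ({l, l + 1} : Finset ℕ) := by simp; omega
  have hk₂ : k + 1 ∉ ({l, l + 1} : Finset ℕ) := by simp; omega
  simp only [site_mul_apply A hk, site_apply A' hl, agreeOff_updatePair_iff, hk₁, hk₂, false_or,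
    updatePair_of_ne hk f _ (t := ⟨l, by omega⟩) (show l ≠ k by omega) (show l ≠ k + 1 by omega),
    updatePair_of_ne hk f _ (t := ⟨l + 1, hl⟩) (show l + 1 ≠ k by omega)
      (show l + 1 ≠ k + 1 by omega),
    ite_and, Fintype.sum_prod_type, mul_ite, mul_one, mul_zero, Finset.sum_ite_irrel,
    Finset.sum_const_zero, Finset.sum_ite_eq', Finset.mem_univ, if_true]

lemma site_commute (A A' : Matrix (Fin n × Fin n) (Fin n × Fin n) ℂ) {k l : ℕ} (h : k + 2 ≤ l) :
    Commute (site n m A k) (site n m A' l) := by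
  by_cases hl : l + 1 < m
  · refine Matrix.ext fun f g => ?_
    rw [site_mul_site_apply A A' (k := k) (by omega) hl (.inl h),
      site_mul_site_apply A' A (k := l) (l := k) hl (by omega) (.inr h), Finset.union_comm]
    ring
  · rw [site_of_not_lt A' hl]
    exact Commute.one_right _

lemma agreeOff_updatePair_updatePair_iff {k : ℕ} (hk : k + 1 < m) (S : Finset ℕ)
    (f g : Fin m → Fin n) (p q : Fin n × Fin n) :
    AgreeOff S (updatePair k hk f p) (updatePair k hk g q) ↔
      (k ∈ S ∨ p.1 = q.1) ∧ (k + 1 ∈ S ∨ p.2 = q.2) ∧ AgreeOff (S ∪ {k, k + 1}) f g := by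
  rw [agreeOff_updatePair_iff, agreeOff_comm (f := f), agreeOff_updatePair_iff, agreeOff_comm,
    Finset.union_assoc, Finset.union_self]
  simp

lemma QYBE.entrywise {R : Fin n → Fin n → Fin n → Fin n → ℂ} (hR : QYBE n R) (x y z u v w : Fin n) :
    ∑ a, ∑ b, ∑ c, R x c y a * R c u z b * R a v b w =
      ∑ a, ∑ b, ∑ c, R y b z c * R x a c w * R a u b v := by
  have h := congrFun (congrFun hR (x, y, z)) (u, v, w)
  simpa only [Matrix.mul_apply, Rmat12, Rmat13, Rmat23, Matrix.of_apply,
    Fintype.sum_prod_type, mul_ite, mul_one, mul_zero, ite_mul, zero_mul, one_mul,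
    Finset.sum_ite_eq, Finset.sum_ite_eq', Finset.mem_univ, if_true,
    Finset.sum_ite_irrel, Finset.sum_const_zero, Finset.mul_sum, Finset.sum_mul] using h

lemma site_braid {R : Fin n → Fin n → Fin n → Fin n → ℂ} (hR : QYBE n R) {k : ℕ}
    (hk : k + 2 < m) :
    site n m (PRmat n R) k * site n m (PRmat n R) (k + 1) * site n m (PRmat n R) k =
      site n m (PRmat n R) (k + 1) * site n m (PRmat n R) k * site n m (PRmat n R) (k + 1) := by
  have hk' : k + 1 < m := by omega
  refine Matrix.ext fun f g => ?_
  rw [mul_site_apply _ hk', mul_site_apply _ hk]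
  simp only [site_mul_apply _ hk', site_mul_apply _ hk, site_apply _ hk', site_apply _ hk,
    agreeOff_updatePair_updatePair_iff, updatePair_left, updatePair_right,
    updatePair_of_ne hk' _ _ (t := ⟨k + 1 + 1, hk⟩) (show k + 1 + 1 ≠ k by omega)
      (show k + 1 + 1 ≠ k + 1 by omega),
    updatePair_of_ne hk _ _ (t := ⟨k, by omega⟩) (show k ≠ k + 1 by omega)
      (show k ≠ k + 1 + 1 by omega)]
  rw [Finset.union_comm {k + 1, k + 1 + 1}]
  by_cases hfg : AgreeOff ({k, k + 1} ∪ {k + 1, k + 1 + 1}) f g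
  · simp only [hfg, and_true]
    simp [PRmat, Fintype.sum_prod_type, Finset.sum_mul, show k ≠ k + 1 + 1 by omega,
      show k + 1 + 1 ≠ k by omega]
    rw [Finset.sum_comm, eq_comm, Finset.sum_comm]
    exact hR.entrywise _ _ _ _ _ _
  · simp only [hfg, and_false, if_false, mul_zero, zero_mul, Finset.sum_const_zero]

def reverseFactors (n m : ℕ) :
    Matrix (Fin m → Fin n) (Fin m → Fin n) ℂ ≃ₐ[ℂ] Matrix (Fin m → Fin n) (Fin m → Fin n) ℂ :=
  Matrix.reindexAlgEquiv ℂ ℂ (Fin.revPerm.arrowCongr (Equiv.refl (Fin n)))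

lemma reverseFactors_apply (M : Matrix (Fin m → Fin n) (Fin m → Fin n) ℂ) (f g : Fin m → Fin n) :
    reverseFactors n m M f g = M (fun t => f t.rev) (fun t => g t.rev) :=
  rfl

lemma agreeOff_comp_rev_iff {k k' : ℕ} (hkk : k + k' + 2 = m) (f g : Fin m → Fin n) :
    AgreeOff {k, k + 1} (fun t => f t.rev) (fun t => g t.rev) ↔ AgreeOff {k', k' + 1} f g := by
  refine ⟨fun h t ht => ?_, fun h t ht => h t.rev ?_⟩
  · simpa using h t.rev (by simp [Fin.val_rev] at ht ⊢; omega)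
  · simp [Fin.val_rev] at ht ⊢; omega

lemma reverseFactors_site (A : Matrix (Fin n × Fin n) (Fin n × Fin n) ℂ) {k k' : ℕ}
    (hkk : k + k' + 2 = m) :
    reverseFactors n m (site n m A k) = site n m (A.submatrix Prod.swap Prod.swap) k' := by
  have hk : k + 1 < m := by omega
  have hk' : k' + 1 < m := by omega
  have hrev₀ : (⟨k, by omega⟩ : Fin m).rev = ⟨k' + 1, hk'⟩ := Fin.ext (by simp [Fin.val_rev]; omega)
  have hrev₁ : (⟨k + 1, hk⟩ : Fin m).rev = ⟨k', by omega⟩ := Fin.ext (by simp [Fin.val_rev]; omega)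
  ext f g
  rw [reverseFactors_apply, site_apply A hk, site_apply _ hk', hrev₀, hrev₁]
  simp only [agreeOff_comp_rev_iff hkk]
  rfl

lemma PRmat_swapR_submatrix_swap (R : Fin n → Fin n → Fin n → Fin n → ℂ) :
    (PRmat n (swapR n R)).submatrix Prod.swap Prod.swap = PRmat n R := by
  ext p q
  rfl

lemma braidedFact_eq_ascSumProd (R : Fin n → Fin n → Fin n → Fin n → ℂ) (N : ℕ) :
    braidedFact n (N + 2) R = ascSumProd (site n (N + 2) (PRmat n R)) N 2 (N + 1) := by
  unfold braidedFact ascSumProd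
  congr 1
  refine List.map_congr_left fun t _ => ?_
  rw [show N + 2 - (t + 2) = N - t by omega]
  rfl

lemma reverseFactors_braidedFact_swapR (R : Fin n → Fin n → Fin n → Fin n → ℂ) (N : ℕ) :
    reverseFactors n (N + 2) (braidedFact n (N + 2) (swapR n R)) =
      ((List.range (N + 1)).map fun t =>
        descSum (site n (N + 2) (PRmat n R)) (t + 1) (t + 2)).prod := by
  rw [braidedFact, map_list_prod, List.map_map]
  refine congrArg List.prod (List.map_congr_left fun t ht => ?_)
  rw [List.mem_range] at ht
  simp only [Function.comp_apply, braidedInt, map_sum, descSum]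
  refine Finset.sum_congr rfl fun r hr => ?_
  rw [Finset.mem_range] at hr
  rw [chain, ← ascProd, map_ascProd]
  refine ascProd_eq_descProd fun s hs => ?_
  rw [Function.comp_apply, reverseFactors_site _ (k' := t + 1 - r + (r - 1 - s)) (by omega),
    PRmat_swapR_submatrix_swap]

lemma braidedFact_eq_reverseFactors {R : Fin n → Fin n → Fin n → Fin n → ℂ} (hR : QYBE n R)
    (m : ℕ) : braidedFact n m R = reverseFactors n m (braidedFact n m (swapR n R)) := by
  rcases Nat.lt_or_ge m 2 with hm | hm
  · simp [braidedFact, show m - 1 = 0 by omega]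
  · obtain ⟨N, rfl⟩ := Nat.exists_eq_add_of_le' hm
    rw [braidedFact_eq_ascSumProd, reverseFactors_braidedFact_swapR,
      ascSumProd_eq_prod_descSum (B := site n (N + 2) (PRmat n R))
        (fun _ _ => site_braid hR (by omega)) (fun _ _ => site_commute _ _)]

end SiteMatrix

theorem stmt11_general (n : ℕ)
    (R : Fin n → Fin n → Fin n → Fin n → ℂ) (hR : QYBE n R)
    (m : ℕ) (j i : Fin m → Fin n) :
    braidedFact n m R j i =
      braidedFact n m (swapR n R) (fun t => j t.rev) (fun t => i t.rev) := by
  rw [braidedFact_eq_reverseFactors hR, reverseFactors_apply]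

/-- if `R` obeys the QYBE, then for every `m ≥ 1`,
`([m;R]!)^{j_1⋯j_m}_{i_1⋯i_m} = ([m;R₂₁]!)^{j_m⋯j_1}_{i_m⋯i_1}`. -/
theorem stmt11 (n : ℕ) (hn : 1 ≤ n)
    (R : Fin n → Fin n → Fin n → Fin n → ℂ) (hR : QYBE n R)
    (m : ℕ) (hm : 1 ≤ m) (j i : Fin m → Fin n) :
    braidedFact n m R j i =
      braidedFact n m (swapR n R) (fun t => j t.rev) (fun t => i t.rev) :=
  stmt11_general n R hR m j i
end
end

section
/- Let R be an n⁴ complex array obeying the quantum Yang–Baxter equation and of real type II with respect to an involution σ of {1,…,n}. Then for every m ≥ 1 and all multi-indices, conj(([m;R]!)^{j_1⋯j_m}_{i_1⋯i_m}) = ([m;R]!)^{σ(j_m)⋯σ(j_1)}_{σ(i_m)⋯σ(i_1)}. (This expresses that the duality pairing ⟨v^{j_m}⋯v^{j_1}, x_{i_1}⋯x_{i_m}⟩ = ([m;R]!)^{j_1⋯j_m}_{i_1⋯i_m} between braided vectors and covectors satisfies conj⟨b,c⟩ = ⟨b*,c*⟩ for the type II star structures.) -/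
open scoped ComplexConjugate

noncomputable section

namespace S12

variable {n m : ℕ}

def upd2 (f : Fin m → Fin n) (i j : Fin m) (a b : Fin n) : Fin m → Fin n :=
  Function.update (Function.update f i a) j b

@[simp] lemma upd2_snd (f : Fin m → Fin n) (i j : Fin m) (a b : Fin n) :
    upd2 f i j a b j = b := by simp [upd2]

lemma upd2_fst (f : Fin m → Fin n) {i j : Fin m} (h : i ≠ j) (a b : Fin n) :
    upd2 f i j a b i = a := by simp [upd2, Function.update_of_ne h]

lemma upd2_other (f : Fin m → Fin n) {i j t : Fin m} (h1 : t ≠ i) (h2 : t ≠ j)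
    (a b : Fin n) : upd2 f i j a b t = f t := by
  simp [upd2, Function.update_of_ne h2, Function.update_of_ne h1]

lemma upd2_snd' (f : Fin m → Fin n) (i j t : Fin m) (h : t = j) (a b : Fin n) :
    upd2 f i j a b t = b := by subst h; exact upd2_snd f i t a b
lemma upd2_fst' (f : Fin m → Fin n) (i j t : Fin m) (h : t = i) (hij : i ≠ j) (a b : Fin n) :
    upd2 f i j a b t = a := by subst h; exact upd2_fst f hij a b
lemma upd2_other' (f : Fin m → Fin n) (i j t : Fin m) (h1 : t ≠ i) (h2 : t ≠ j) (a b : Fin n) :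
    upd2 f i j a b t = f t := upd2_other f h1 h2 a b

lemma prod_delta (f g : Fin m → Fin n) (k : ℕ) :
    (∏ t : Fin m, (if t.1 = k ∨ t.1 = k+1 then (1:ℂ) else if f t = g t then 1 else 0))
      = if ∀ t : Fin m, t.1 ≠ k → t.1 ≠ k+1 → f t = g t then 1 else 0 := by
  by_cases h : ∀ t : Fin m, t.1 ≠ k → t.1 ≠ k+1 → f t = g t
  · rw [if_pos h]; apply Finset.prod_eq_one; intro t _
    by_cases h1 : t.1 = k ∨ t.1 = k+1
    · simp [h1]
    · push_neg at h1; simp [h1.1, h1.2, h t h1.1 h1.2]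
  · rw [if_neg h]; push_neg at h; obtain ⟨t, h1, h2, h3⟩ := h
    exact Finset.prod_eq_zero (Finset.mem_univ t) (by simp [h1, h2, h3])

lemma site_apply (A : Matrix (Fin n × Fin n) (Fin n × Fin n) ℂ) {k : ℕ} (hk : k+1 < m)
    (f g : Fin m → Fin n) :
    site n m A k f g
      = A (f ⟨k, Nat.lt_of_succ_lt hk⟩, f ⟨k+1, hk⟩) (g ⟨k, Nat.lt_of_succ_lt hk⟩, g ⟨k+1, hk⟩) *
        (if ∀ t : Fin m, t.1 ≠ k → t.1 ≠ k+1 → f t = g t then 1 else 0) := by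
  rw [site, dif_pos hk]
  simp only [Matrix.of_apply]
  rw [prod_delta]

lemma site_eq_one (A : Matrix (Fin n × Fin n) (Fin n × Fin n) ℂ) {k : ℕ} (hk : ¬ (k+1 < m)) :
    site n m A k = 1 := by rw [site, dif_neg hk]

lemma sum_local (f : Fin m → Fin n) {k : ℕ} (hk : k + 1 < m) (F : (Fin m → Fin n) → ℂ) :
    (∑ h : Fin m → Fin n,
        (if ∀ t : Fin m, t.1 ≠ k → t.1 ≠ k+1 → f t = h t then (1:ℂ) else 0) * F h)
      = ∑ a : Fin n, ∑ b : Fin n, F (upd2 f ⟨k, Nat.lt_of_succ_lt hk⟩ ⟨k+1, hk⟩ a b) := by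
  have hij : (⟨k, Nat.lt_of_succ_lt hk⟩ : Fin m) ≠ ⟨k+1, hk⟩ := by
    simp [Fin.ext_iff]
  have e : (∑ a : Fin n, ∑ b : Fin n, F (upd2 f ⟨k, Nat.lt_of_succ_lt hk⟩ ⟨k+1, hk⟩ a b))
      = ∑ p : Fin n × Fin n, F (upd2 f ⟨k, Nat.lt_of_succ_lt hk⟩ ⟨k+1, hk⟩ p.1 p.2) := by
    rw [Fintype.sum_prod_type]
  rw [e]
  simp only [boole_mul]
  rw [Finset.sum_ite, Finset.sum_const_zero, add_zero]
  apply Finset.sum_nbij' (i := fun h => (h ⟨k, Nat.lt_of_succ_lt hk⟩, h ⟨k+1, hk⟩))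
    (j := fun p => upd2 f ⟨k, Nat.lt_of_succ_lt hk⟩ ⟨k+1, hk⟩ p.1 p.2)
  · intro h hmem; exact Finset.mem_univ _
  · intro p _
    simp only [Finset.mem_filter, Finset.mem_univ, true_and]
    intro t h1 h2
    exact (upd2_other f (by simp [Fin.ext_iff, h1]) (by simp [Fin.ext_iff, h2]) _ _).symm
  · intro h hmem
    simp only [Finset.mem_filter, Finset.mem_univ, true_and] at hmem
    funext t
    by_cases h2 : t = ⟨k+1, hk⟩
    · subst h2; simp
    · by_cases h1 : t = ⟨k, Nat.lt_of_succ_lt hk⟩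
      · subst h1; rw [upd2_fst _ hij]
      · rw [upd2_other f h1 h2]
        exact hmem t (by simpa [Fin.ext_iff] using h1) (by simpa [Fin.ext_iff] using h2)
  · intro p _
    simp [upd2_fst _ hij]
  · intro h hmem
    simp only [Finset.mem_filter, Finset.mem_univ, true_and] at hmem
    congr 1
    funext t
    by_cases h2 : t = ⟨k+1, hk⟩
    · subst h2; simp
    · by_cases h1 : t = ⟨k, Nat.lt_of_succ_lt hk⟩
      · subst h1; rw [upd2_fst _ hij]
      · rw [upd2_other f h1 h2]
        exact (hmem t (by simpa [Fin.ext_iff] using h1) (by simpa [Fin.ext_iff] using h2)).symm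

lemma fin_ne {k : ℕ} (hk : k + 1 < m) :
    (⟨k, Nat.lt_of_succ_lt hk⟩ : Fin m) ≠ ⟨k+1, hk⟩ := by simp [Fin.ext_iff]

lemma site_mul_apply (A : Matrix (Fin n × Fin n) (Fin n × Fin n) ℂ) {k : ℕ} (hk : k+1 < m)
    (M : Matrix (Fin m → Fin n) (Fin m → Fin n) ℂ) (f g : Fin m → Fin n) :
    (site n m A k * M) f g
      = ∑ a : Fin n, ∑ b : Fin n,
          A (f ⟨k, Nat.lt_of_succ_lt hk⟩, f ⟨k+1, hk⟩) (a, b) *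
            M (upd2 f ⟨k, Nat.lt_of_succ_lt hk⟩ ⟨k+1, hk⟩ a b) g := by
  rw [Matrix.mul_apply]
  have key : ∀ h : Fin m → Fin n, site n m A k f h * M h g
      = (if ∀ t : Fin m, t.1 ≠ k → t.1 ≠ k+1 → f t = h t then (1:ℂ) else 0) *
        (A (f ⟨k, Nat.lt_of_succ_lt hk⟩, f ⟨k+1, hk⟩)
          (h ⟨k, Nat.lt_of_succ_lt hk⟩, h ⟨k+1, hk⟩) * M h g) := by
    intro h; rw [site_apply A hk]; ring
  simp only [key]
  rw [sum_local f hk]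
  apply Finset.sum_congr rfl; intro a _; apply Finset.sum_congr rfl; intro b _
  rw [upd2_fst f (fin_ne hk), upd2_snd]

lemma mul_site_apply (A : Matrix (Fin n × Fin n) (Fin n × Fin n) ℂ) {k : ℕ} (hk : k+1 < m)
    (M : Matrix (Fin m → Fin n) (Fin m → Fin n) ℂ) (f g : Fin m → Fin n) :
    (M * site n m A k) f g
      = ∑ a : Fin n, ∑ b : Fin n,
          M f (upd2 g ⟨k, Nat.lt_of_succ_lt hk⟩ ⟨k+1, hk⟩ a b) *
            A (a, b) (g ⟨k, Nat.lt_of_succ_lt hk⟩, g ⟨k+1, hk⟩) := by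
  rw [Matrix.mul_apply]
  have key : ∀ h : Fin m → Fin n, M f h * site n m A k h g
      = (if ∀ t : Fin m, t.1 ≠ k → t.1 ≠ k+1 → g t = h t then (1:ℂ) else 0) *
        (M f h * A (h ⟨k, Nat.lt_of_succ_lt hk⟩, h ⟨k+1, hk⟩)
          (g ⟨k, Nat.lt_of_succ_lt hk⟩, g ⟨k+1, hk⟩)) := by
    intro h; rw [site_apply A hk]
    have : (if ∀ t : Fin m, t.1 ≠ k → t.1 ≠ k+1 → h t = g t then (1:ℂ) else 0)
        = (if ∀ t : Fin m, t.1 ≠ k → t.1 ≠ k+1 → g t = h t then (1:ℂ) else 0) := by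
      refine if_congr (forall_congr' fun t => ?_) rfl rfl
      constructor <;> intro hh h1 h2 <;> exact (hh h1 h2).symm
    rw [this]; ring
  simp only [key]
  rw [sum_local g hk]
  apply Finset.sum_congr rfl; intro a _; apply Finset.sum_congr rfl; intro b _
  rw [upd2_fst g (fin_ne hk), upd2_snd]
lemma qybe_entry {n : ℕ} {R : Fin n → Fin n → Fin n → Fin n → ℂ} (hR : QYBE n R)
    (p1 p2 p3 q1 q2 q3 : Fin n) :
    (∑ a : Fin n, ∑ b : Fin n, ∑ c : Fin n, R p1 a p2 b * R a q1 p3 c * R b q2 c q3)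
      = ∑ a : Fin n, ∑ b : Fin n, ∑ c : Fin n, R p2 a p3 b * R p1 c b q3 * R c q1 a q2 := by
  have h : (Rmat12 n R * Rmat13 n R * Rmat23 n R) (p1,p2,p3) (q1,q2,q3)
      = (Rmat23 n R * Rmat13 n R * Rmat12 n R) (p1,p2,p3) (q1,q2,q3) := by rw [hR]
  simp only [Matrix.mul_apply, Rmat12, Rmat13, Rmat23, Matrix.of_apply,
    Fintype.sum_prod_type, Finset.sum_mul, Finset.mul_sum, ite_mul, mul_ite,
    one_mul, mul_one, zero_mul, mul_zero, Finset.sum_ite_eq, Finset.sum_ite_eq',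
    Finset.mem_univ, if_true] at h ⊢
  simp only [Finset.sum_ite_irrel, Finset.sum_const_zero, Finset.sum_ite_eq, Finset.sum_ite_eq',
    Finset.mem_univ, if_true] at h
  have comm3 : ∀ (F : Fin n → Fin n → Fin n → ℂ),
      (∑ a : Fin n, ∑ b : Fin n, ∑ c : Fin n, F a b c)
        = ∑ b : Fin n, ∑ c : Fin n, ∑ a : Fin n, F a b c := by
    intro F
    rw [Finset.sum_comm]
    exact Finset.sum_congr rfl fun b _ => Finset.sum_comm
  have e1 := comm3 (fun a b c => R p1 a p2 b * R a q1 p3 c * R b q2 c q3)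
  have e2 := (comm3 (fun a b c => R p2 a p3 b * R p1 c b q3 * R c q1 a q2)).trans
    (comm3 (fun b c a => R p2 a p3 b * R p1 c b q3 * R c q1 a q2))
  rw [e1, e2]
  exact h
lemma ite_conj {P Q : Prop} [Decidable P] [Decidable Q] :
    (if P ∧ Q then (1:ℂ) else 0) = (if P then (1:ℂ) else 0) * (if Q then (1:ℂ) else 0) := by
  by_cases hP : P <;> by_cases hQ : Q <;> simp [hP, hQ]

/-- commutation of distant sites -/
lemma site_comm (A B : Matrix (Fin n × Fin n) (Fin n × Fin n) ℂ) {j k : ℕ}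
    (h : j + 2 ≤ k) :
    site n m A j * site n m B k = site n m B k * site n m A j := by
  by_cases hk : k + 1 < m
  · have hj : j + 1 < m := by omega
    ext f g
    rw [site_mul_apply A hj, site_mul_apply B hk]
    have condA : ∀ a b : Fin n,
        (∀ t : Fin m, t.1 ≠ k → t.1 ≠ k+1 →
          upd2 f ⟨j, Nat.lt_of_succ_lt hj⟩ ⟨j+1, hj⟩ a b t = g t)
        ↔ (a = g ⟨j, Nat.lt_of_succ_lt hj⟩ ∧ b = g ⟨j+1, hj⟩ ∧
            ∀ t : Fin m, t.1 ≠ j → t.1 ≠ j+1 → t.1 ≠ k → t.1 ≠ k+1 → f t = g t) := by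
      intro a b
      constructor
      · intro hc
        refine ⟨?_, ?_, ?_⟩
        · have := hc ⟨j, Nat.lt_of_succ_lt hj⟩ (by simp; omega) (by simp; omega)
          rwa [upd2_fst f (by simp [Fin.ext_iff] <;> omega)] at this
        · have := hc ⟨j+1, hj⟩ (by simp; omega) (by simp; omega)
          rwa [upd2_snd] at this
        · intro t h1 h2 h3 h4
          have := hc t h3 h4
          rwa [upd2_other f (by simp [Fin.ext_iff, h1]) (by simp [Fin.ext_iff, h2])] at this
      · rintro ⟨ha, hb, hE⟩ t h3 h4
        by_cases h2 : t = (⟨j+1, hj⟩ : Fin m)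
        · subst h2; rw [upd2_snd]; exact hb
        · by_cases h1 : t = (⟨j, Nat.lt_of_succ_lt hj⟩ : Fin m)
          · subst h1; rw [upd2_fst f (by simp [Fin.ext_iff] <;> omega)]; exact ha
          · rw [upd2_other f h1 h2]
            exact hE t (by simpa [Fin.ext_iff] using h1) (by simpa [Fin.ext_iff] using h2) h3 h4
    have condB : ∀ a b : Fin n,
        (∀ t : Fin m, t.1 ≠ j → t.1 ≠ j+1 →
          upd2 f ⟨k, Nat.lt_of_succ_lt hk⟩ ⟨k+1, hk⟩ a b t = g t)
        ↔ (a = g ⟨k, Nat.lt_of_succ_lt hk⟩ ∧ b = g ⟨k+1, hk⟩ ∧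
            ∀ t : Fin m, t.1 ≠ j → t.1 ≠ j+1 → t.1 ≠ k → t.1 ≠ k+1 → f t = g t) := by
      intro a b
      constructor
      · intro hc
        refine ⟨?_, ?_, ?_⟩
        · have := hc ⟨k, Nat.lt_of_succ_lt hk⟩ (by simp; omega) (by simp; omega)
          rwa [upd2_fst f (by simp [Fin.ext_iff] <;> omega)] at this
        · have := hc ⟨k+1, hk⟩ (by simp; omega) (by simp; omega)
          rwa [upd2_snd] at this
        · intro t h1 h2 h3 h4
          have := hc t h1 h2
          rwa [upd2_other f (by simp [Fin.ext_iff, h3]) (by simp [Fin.ext_iff, h4])] at this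
      · rintro ⟨ha, hb, hE⟩ t h1 h2
        by_cases h4 : t = (⟨k+1, hk⟩ : Fin m)
        · subst h4; rw [upd2_snd]; exact hb
        · by_cases h3 : t = (⟨k, Nat.lt_of_succ_lt hk⟩ : Fin m)
          · subst h3; rw [upd2_fst f (by simp [Fin.ext_iff] <;> omega)]; exact ha
          · rw [upd2_other f h3 h4]
            exact hE t h1 h2 (by simpa [Fin.ext_iff] using h3) (by simpa [Fin.ext_iff] using h4)
    have eB : ∀ a b : Fin n, site n m B k
        (upd2 f ⟨j, Nat.lt_of_succ_lt hj⟩ ⟨j+1, hj⟩ a b) g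
        = B (f ⟨k, Nat.lt_of_succ_lt hk⟩, f ⟨k+1, hk⟩)
            (g ⟨k, Nat.lt_of_succ_lt hk⟩, g ⟨k+1, hk⟩) *
          ((if a = g ⟨j, Nat.lt_of_succ_lt hj⟩ then (1:ℂ) else 0) *
           ((if b = g ⟨j+1, hj⟩ then (1:ℂ) else 0) *
            (if (∀ t : Fin m, t.1 ≠ j → t.1 ≠ j+1 → t.1 ≠ k → t.1 ≠ k+1 → f t = g t)
              then (1:ℂ) else 0))) := by
      intro a b
      rw [site_apply B hk]
      rw [upd2_other f (by simp [Fin.ext_iff] <;> omega) (by simp [Fin.ext_iff] <;> omega),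
          upd2_other f (by simp [Fin.ext_iff] <;> omega) (by simp [Fin.ext_iff] <;> omega)]
      rw [if_congr (condA a b) rfl rfl, ite_conj, ite_conj]
    have eA : ∀ a b : Fin n, site n m A j
        (upd2 f ⟨k, Nat.lt_of_succ_lt hk⟩ ⟨k+1, hk⟩ a b) g
        = A (f ⟨j, Nat.lt_of_succ_lt hj⟩, f ⟨j+1, hj⟩)
            (g ⟨j, Nat.lt_of_succ_lt hj⟩, g ⟨j+1, hj⟩) *
          ((if a = g ⟨k, Nat.lt_of_succ_lt hk⟩ then (1:ℂ) else 0) *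
           ((if b = g ⟨k+1, hk⟩ then (1:ℂ) else 0) *
            (if (∀ t : Fin m, t.1 ≠ j → t.1 ≠ j+1 → t.1 ≠ k → t.1 ≠ k+1 → f t = g t)
              then (1:ℂ) else 0))) := by
      intro a b
      rw [site_apply A hj]
      rw [upd2_other f (by simp [Fin.ext_iff] <;> omega) (by simp [Fin.ext_iff] <;> omega),
          upd2_other f (by simp [Fin.ext_iff] <;> omega) (by simp [Fin.ext_iff] <;> omega)]
      rw [if_congr (condB a b) rfl rfl, ite_conj, ite_conj]
    simp only [eA, eB]
    simp only [mul_ite, ite_mul, mul_zero, zero_mul, mul_one, one_mul,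
      Finset.sum_ite_irrel, Finset.sum_const_zero, Finset.sum_ite_eq, Finset.sum_ite_eq',
      Finset.mem_univ, if_true]
    ring_nf
  · rw [site_eq_one B hk, mul_one, one_mul]

section
variable {R : Fin n → Fin n → Fin n → Fin n → ℂ}

lemma condL_iff (f g : Fin m → Fin n) {k : ℕ} (hk2 : k+2 < m) (a b c d : Fin n) :
    (∀ t : Fin m, t.1 ≠ k → t.1 ≠ k+1 →
      upd2 (upd2 f ⟨k, by omega⟩ ⟨k+1, by omega⟩ a b) ⟨k+1, by omega⟩ ⟨k+2, hk2⟩ c d t = g t)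
    ↔ (d = g ⟨k+2, hk2⟩ ∧
        ∀ t : Fin m, t.1 ≠ k → t.1 ≠ k+1 → t.1 ≠ k+2 → f t = g t) := by
  constructor
  · intro hc
    constructor
    · have := hc ⟨k+2, hk2⟩ (by simp) (by simp)
      rwa [upd2_snd] at this
    · intro t h1 h2 h3
      have := hc t h1 h2
      rwa [upd2_other _ (by simp [Fin.ext_iff, h2]) (by simp [Fin.ext_iff, h3]),
        upd2_other f (by simp [Fin.ext_iff, h1]) (by simp [Fin.ext_iff, h2])] at this
  · rintro ⟨hd, hE⟩ t h1 h2
    by_cases h3 : t = (⟨k+2, hk2⟩ : Fin m)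
    · subst h3; rw [upd2_snd]; exact hd
    · rw [upd2_other _ (by simp [Fin.ext_iff, h2]) h3,
        upd2_other f (by simp [Fin.ext_iff, h1]) (by simp [Fin.ext_iff, h2])]
      exact hE t h1 h2 (by simpa [Fin.ext_iff] using h3)

lemma condR_iff (f g : Fin m → Fin n) {k : ℕ} (hk2 : k+2 < m) (a b c d : Fin n) :
    (∀ t : Fin m, t.1 ≠ k+1 → t.1 ≠ k+2 →
      upd2 (upd2 f ⟨k+1, by omega⟩ ⟨k+2, hk2⟩ a b) ⟨k, by omega⟩ ⟨k+1, by omega⟩ c d t = g t)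
    ↔ (c = g ⟨k, by omega⟩ ∧
        ∀ t : Fin m, t.1 ≠ k → t.1 ≠ k+1 → t.1 ≠ k+2 → f t = g t) := by
  have hne : (⟨k, by omega⟩ : Fin m) ≠ ⟨k+1, by omega⟩ := by simp [Fin.ext_iff]
  constructor
  · intro hc
    constructor
    · have := hc ⟨k, by omega⟩ (by simp) (by simp <;> omega)
      rwa [upd2_fst _ hne] at this
    · intro t h1 h2 h3
      have := hc t h2 h3
      rwa [upd2_other _ (by simp [Fin.ext_iff, h1]) (by simp [Fin.ext_iff, h2]),
        upd2_other f (by simp [Fin.ext_iff, h2]) (by simp [Fin.ext_iff, h3])] at this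
  · rintro ⟨hcv, hE⟩ t h2 h3
    by_cases h1 : t = (⟨k, by omega⟩ : Fin m)
    · subst h1; rw [upd2_fst _ hne]; exact hcv
    · rw [upd2_other _ h1 (by simp [Fin.ext_iff, h2]),
        upd2_other f (by simp [Fin.ext_iff, h2]) (by simp [Fin.ext_iff, h3])]
      exact hE t (by simpa [Fin.ext_iff] using h1) h2 h3

lemma braid (hR : QYBE n R) {k : ℕ} (hk2 : k + 2 < m) :
    site n m (PRmat n R) k * site n m (PRmat n R) (k+1) * site n m (PRmat n R) k
      = site n m (PRmat n R) (k+1) * site n m (PRmat n R) k * site n m (PRmat n R) (k+1) := by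
  · have hk1 : k + 1 < m := by omega
    have hk11 : (k+1) + 1 < m := by omega
    ext f g
    rw [Matrix.mul_assoc, Matrix.mul_assoc]
    rw [site_mul_apply _ hk1, site_mul_apply _ hk11]
    have eL : ∀ a b : Fin n,
        (site n m (PRmat n R) (k+1) * site n m (PRmat n R) k)
          (upd2 f ⟨k, Nat.lt_of_succ_lt hk1⟩ ⟨k+1, hk1⟩ a b) g
        = ∑ c : Fin n, ∑ d : Fin n,
            PRmat n R (b, f ⟨k+2, hk2⟩) (c, d) *
            (PRmat n R (a, c) (g ⟨k, Nat.lt_of_succ_lt hk1⟩, g ⟨k+1, hk1⟩) *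
              ((if d = g ⟨k+2, hk2⟩ then (1:ℂ) else 0) *
               (if (∀ t : Fin m, t.1 ≠ k → t.1 ≠ k+1 → t.1 ≠ k+2 → f t = g t)
                 then (1:ℂ) else 0))) := by
      intro a b
      rw [site_mul_apply _ hk11]
      apply Finset.sum_congr rfl; intro c _; apply Finset.sum_congr rfl; intro d _
      have hv1 : upd2 f ⟨k, Nat.lt_of_succ_lt hk1⟩ ⟨k+1, hk1⟩ a b
          ⟨k+1, Nat.lt_of_succ_lt hk11⟩ = b :=
        upd2_snd' _ _ _ _ (by simp [Fin.ext_iff] <;> omega) _ _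
      have hv2 : upd2 f ⟨k, Nat.lt_of_succ_lt hk1⟩ ⟨k+1, hk1⟩ a b ⟨k+1+1, hk11⟩
          = f ⟨k+2, hk2⟩ := by
        rw [upd2_other' _ _ _ _ (by simp [Fin.ext_iff] <;> omega) (by simp [Fin.ext_iff] <;> omega) _ _]
      rw [hv1, hv2, site_apply _ hk1]
      have hw1 : upd2 (upd2 f ⟨k, Nat.lt_of_succ_lt hk1⟩ ⟨k+1, hk1⟩ a b)
          ⟨k+1, Nat.lt_of_succ_lt hk11⟩ ⟨k+1+1, hk11⟩ c d ⟨k, Nat.lt_of_succ_lt hk1⟩ = a := by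
        rw [upd2_other' _ _ _ _ (by simp [Fin.ext_iff] <;> omega) (by simp [Fin.ext_iff] <;> omega) _ _,
          upd2_fst' _ _ _ _ rfl (by simp [Fin.ext_iff] <;> omega) _ _]
      have hw2 : upd2 (upd2 f ⟨k, Nat.lt_of_succ_lt hk1⟩ ⟨k+1, hk1⟩ a b)
          ⟨k+1, Nat.lt_of_succ_lt hk11⟩ ⟨k+1+1, hk11⟩ c d ⟨k+1, hk1⟩ = c :=
        upd2_fst' _ _ _ _ (by simp [Fin.ext_iff] <;> omega) (by simp [Fin.ext_iff] <;> omega) _ _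
      rw [hw1, hw2]
      have hcond := condL_iff (k := k) f g hk2 a b c d
      rw [if_congr hcond rfl rfl, ite_conj]
    have eR : ∀ a b : Fin n,
        (site n m (PRmat n R) k * site n m (PRmat n R) (k+1))
          (upd2 f ⟨k+1, Nat.lt_of_succ_lt hk11⟩ ⟨k+1+1, hk11⟩ a b) g
        = ∑ c : Fin n, ∑ d : Fin n,
            PRmat n R (f ⟨k, Nat.lt_of_succ_lt hk1⟩, a) (c, d) *
            (PRmat n R (d, b) (g ⟨k+1, hk1⟩, g ⟨k+2, hk2⟩) *
              ((if c = g ⟨k, Nat.lt_of_succ_lt hk1⟩ then (1:ℂ) else 0) *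
               (if (∀ t : Fin m, t.1 ≠ k → t.1 ≠ k+1 → t.1 ≠ k+2 → f t = g t)
                 then (1:ℂ) else 0))) := by
      intro a b
      rw [site_mul_apply _ hk1]
      apply Finset.sum_congr rfl; intro c _; apply Finset.sum_congr rfl; intro d _
      have hv1 : upd2 f ⟨k+1, Nat.lt_of_succ_lt hk11⟩ ⟨k+1+1, hk11⟩ a b
          ⟨k, Nat.lt_of_succ_lt hk1⟩ = f ⟨k, Nat.lt_of_succ_lt hk1⟩ := by
        rw [upd2_other' _ _ _ _ (by simp [Fin.ext_iff] <;> omega) (by simp [Fin.ext_iff] <;> omega) _ _]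
      have hv2 : upd2 f ⟨k+1, Nat.lt_of_succ_lt hk11⟩ ⟨k+1+1, hk11⟩ a b ⟨k+1, hk1⟩ = a :=
        upd2_fst' _ _ _ _ (by simp [Fin.ext_iff] <;> omega) (by simp [Fin.ext_iff] <;> omega) _ _
      rw [hv1, hv2, site_apply _ hk11]
      have hw1 : upd2 (upd2 f ⟨k+1, Nat.lt_of_succ_lt hk11⟩ ⟨k+1+1, hk11⟩ a b)
          ⟨k, Nat.lt_of_succ_lt hk1⟩ ⟨k+1, hk1⟩ c d ⟨k+1, Nat.lt_of_succ_lt hk11⟩ = d :=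
        upd2_snd' _ _ _ _ (by simp [Fin.ext_iff] <;> omega) _ _
      have hw2 : upd2 (upd2 f ⟨k+1, Nat.lt_of_succ_lt hk11⟩ ⟨k+1+1, hk11⟩ a b)
          ⟨k, Nat.lt_of_succ_lt hk1⟩ ⟨k+1, hk1⟩ c d ⟨k+1+1, hk11⟩ = b := by
        rw [upd2_other' _ _ _ _ (by simp [Fin.ext_iff] <;> omega) (by simp [Fin.ext_iff] <;> omega) _ _,
          upd2_snd' _ _ _ _ (by simp [Fin.ext_iff] <;> omega) _ _]
      rw [hw1, hw2]
      have hcond := condR_iff (k := k) f g hk2 a b c d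
      rw [if_congr hcond rfl rfl, ite_conj]
    simp only [eL, eR]
    simp only [Finset.mul_sum, mul_ite, ite_mul, mul_zero, zero_mul, mul_one, one_mul,
      Finset.sum_ite_irrel, Finset.sum_const_zero, Finset.sum_ite_eq, Finset.sum_ite_eq',
      Finset.mem_univ, if_true]
    by_cases hE : (∀ t : Fin m, t.1 ≠ k → t.1 ≠ k+1 → t.1 ≠ k+2 → f t = g t)
    · rw [if_pos hE, if_pos hE]
      have key := (qybe_entry hR (f ⟨k+2, hk2⟩) (f ⟨k+1, hk1⟩)
        (f ⟨k, Nat.lt_of_succ_lt hk1⟩) (g ⟨k, Nat.lt_of_succ_lt hk1⟩) (g ⟨k+1, hk1⟩)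
        (g ⟨k+2, hk2⟩))
      have hfix : (⟨k+1+1, hk11⟩ : Fin m) = ⟨k+2, hk2⟩ := by simp [Fin.ext_iff]
      rw [hfix]
      simp only [PRmat, Matrix.of_apply]
      refine Eq.trans ?_ (Eq.trans key.symm ?_)
      · apply Finset.sum_congr rfl; intro x _
        apply Finset.sum_congr rfl; intro y _
        apply Finset.sum_congr rfl; intro z _
        ring
      · apply Finset.sum_congr rfl; intro x _
        apply Finset.sum_congr rfl; intro y _
        apply Finset.sum_congr rfl; intro z _
        ring
    · simp only [hE, if_false]
end
section Alg
variable {M : Type} [Ring M] (g : ℕ → M) (m : ℕ)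

/-- ascending chain `g off * g (off+1) * ⋯ * g (off+r-1)` -/
def aCh (off r : ℕ) : M := ((List.range r).map fun s => g (off + s)).prod
/-- descending run `g top * g (top-1) * ⋯ * g (top-r+1)` -/
def dRun (top r : ℕ) : M := ((List.range r).map fun s => g (top - s)).prod
/-- braided integer (ascending) -/
def AInt (off k : ℕ) : M := ∑ r ∈ Finset.range k, aCh g off r
/-- braided integer (descending) -/
def DInt (top k : ℕ) : M := ∑ r ∈ Finset.range k, dRun g top r
def Fasc (off p : ℕ) : M := ((List.range p).map fun t => AInt g (off + (p - (t+1))) (t+2)).prod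
def Fdesc (off p : ℕ) : M := ((List.range p).map fun t => DInt g (off + t) (t+2)).prod

@[simp] lemma aCh_zero (off : ℕ) : aCh g off 0 = 1 := rfl
@[simp] lemma dRun_zero (top : ℕ) : dRun g top 0 = 1 := rfl

lemma aCh_succ (off r : ℕ) : aCh g off (r+1) = aCh g off r * g (off + r) := by
  simp [aCh, List.range_succ]

lemma aCh_succ' (off r : ℕ) : aCh g off (r+1) = g off * aCh g (off+1) r := by
  simp only [aCh]
  rw [List.range_succ_eq_map, List.map_cons, List.prod_cons, List.map_map, Nat.add_zero]
  have hmap : List.map ((fun s => g (off + s)) ∘ Nat.succ) (List.range r)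
      = List.map (fun s => g (off+1+s)) (List.range r) :=
    List.map_congr_left fun s _ => by
      simp only [Function.comp_apply]; congr 1; omega
  rw [hmap]

lemma aCh_add (off r s : ℕ) : aCh g off (r+s) = aCh g off r * aCh g (off+r) s := by
  induction s with
  | zero => simp
  | succ s ih => rw [← Nat.add_assoc, aCh_succ, ih, aCh_succ, mul_assoc]; congr 3; omega

lemma dRun_succ_top (top r : ℕ) : dRun g top (r+1) = g top * dRun g (top-1) r := by
  simp only [dRun]
  rw [List.range_succ_eq_map, List.map_cons, List.prod_cons, List.map_map, Nat.sub_zero]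
  have hmap : List.map ((fun s => g (top - s)) ∘ Nat.succ) (List.range r)
      = List.map (fun s => g (top-1-s)) (List.range r) :=
    List.map_congr_left fun s _ => by
      simp only [Function.comp_apply]; congr 1; omega
  rw [hmap]

lemma dRun_succ_bot (top r : ℕ) : dRun g top (r+1) = dRun g top r * g (top - r) := by
  simp [dRun, List.range_succ]

lemma Fasc_succ (off p : ℕ) :
    Fasc g off (p+1) = Fasc g (off+1) p * AInt g off (p+2) := by
  simp only [Fasc]
  rw [List.range_succ, List.map_append, List.prod_append]
  congr 1
  · have hmap : List.map (fun t => AInt g (off + (p+1 - (t+1))) (t+2)) (List.range p)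
        = List.map (fun t => AInt g ((off+1) + (p - (t+1))) (t+2)) (List.range p) :=
      List.map_congr_left fun t ht => by
        have htp : t < p := List.mem_range.mp ht
        have : off + (p+1 - (t+1)) = (off+1) + (p - (t+1)) := by omega
        rw [this]
    rw [hmap]
  · simp

lemma Fdesc_succ (off p : ℕ) :
    Fdesc g off (p+1) = Fdesc g off p * DInt g (off+p) (p+2) := by
  simp only [Fdesc]
  rw [List.range_succ, List.map_append, List.prod_append]
  simp


section comm
variable (hcomm : ∀ {j k : ℕ}, j + 2 ≤ k → g j * g k = g k * g j)
include hcomm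

lemma aCh_comm_g {off r k : ℕ} (h : off + r + 1 ≤ k) :
    aCh g off r * g k = g k * aCh g off r := by
  induction r with
  | zero => simp
  | succ r ih =>
      rw [aCh_succ, mul_assoc, hcomm (by omega), ← mul_assoc, ih (by omega), mul_assoc]

lemma dRun_comm_g_below {top r k : ℕ} (h : k + r + 1 ≤ top) :
    g k * dRun g top r = dRun g top r * g k := by
  induction r with
  | zero => simp
  | succ r ih =>
      rw [dRun_succ_bot, ← mul_assoc, ih (by omega), mul_assoc, mul_assoc]
      congr 1
      exact hcomm (by omega)

lemma dRun_comm_g_above {top r k : ℕ} (h : top + 2 ≤ k) :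
    g k * dRun g top r = dRun g top r * g k := by
  induction r with
  | zero => simp
  | succ r ih =>
      rw [dRun_succ_bot, ← mul_assoc, ih, mul_assoc, mul_assoc]
      congr 1
      exact (hcomm (by omega)).symm

lemma dRun_comm_aCh {off r top r' : ℕ} (h : off + r + r' ≤ top) :
    dRun g top r' * aCh g off r = aCh g off r * dRun g top r' := by
  induction r with
  | zero => simp
  | succ r ih =>
      rw [aCh_succ, ← mul_assoc, ih (by omega), mul_assoc, mul_assoc]
      congr 1
      exact (dRun_comm_g_below g hcomm (by omega)).symm
end comm

section zipsec
variable (hcomm : ∀ {j k : ℕ}, j + 2 ≤ k → g j * g k = g k * g j)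
variable (hbraid : ∀ {k : ℕ}, k + 2 < m → g k * g (k+1) * g k = g (k+1) * g k * g (k+1))
include hcomm hbraid

lemma zip : ∀ (d j r t : ℕ), j = t + 1 + d → j + 1 ≤ t + r → t + 1 ≤ j → j + 1 < m →
    r ≤ j + 1 →
    dRun g j r * g (t+1) = g t * dRun g j r := by
  intro d
  induction d with
  | zero =>
      intro j r t hj h1 h2 hm' hr
      subst hj
      obtain ⟨r', rfl⟩ : ∃ r', r = r' + 2 := ⟨r - 2, by omega⟩
      rw [dRun_succ_top, dRun_succ_top]
      have e1 : t + 1 - 1 = t := by omega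
      rw [e1]
      -- goal : g (t+1) * (g t * dRun g (t-1) r') * g (t+1) = g t * (g (t+1) * (g t * dRun g (t-1) r'))
      have hc : g (t+1) * dRun g (t-1) r' = dRun g (t-1) r' * g (t+1) := by
        rcases Nat.eq_zero_or_pos r' with hr0 | hr0
        · subst hr0; simp
        · exact dRun_comm_g_above g hcomm (by omega)
      have hb := hbraid (k := t) (by omega)
      calc g (t+1) * (g t * dRun g (t-1) r') * g (t+1)
          = (g (t+1) * g t) * (dRun g (t-1) r' * g (t+1)) := by noncomm_ring
        _ = (g (t+1) * g t) * (g (t+1) * dRun g (t-1) r') := by rw [hc]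
        _ = (g (t+1) * g t * g (t+1)) * dRun g (t-1) r' := by noncomm_ring
        _ = (g t * g (t+1) * g t) * dRun g (t-1) r' := by rw [← hb]
        _ = g t * (g (t+1) * (g t * dRun g (t-1) r')) := by noncomm_ring
  | succ d ih =>
      intro j r t hj h1 h2 hm' hr
      obtain ⟨r', rfl⟩ : ∃ r', r = r' + 1 := ⟨r - 1, by omega⟩
      rw [dRun_succ_top]
      rw [mul_assoc, ih (j-1) r' t (by omega) (by omega) (by omega) (by omega) (by omega)]
      rw [← mul_assoc, ← mul_assoc]
      congr 1
      exact (hcomm (by omega)).symm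

lemma zipChain : ∀ (v u' j r : ℕ), j + 2 ≤ u' + 1 + r → u' + 1 + v ≤ j + 1 → j + 1 < m →
    r ≤ j + 1 →
    dRun g j r * aCh g (u'+1) v = aCh g u' v * dRun g j r := by
  intro v
  induction v with
  | zero => intro u' j r _ _ _ _; simp
  | succ v ih =>
      intro u' j r hcond1 hcond2 hm' hr
      rw [aCh_succ' g (u'+1) v, aCh_succ' g u' v, ← mul_assoc]
      have hz : dRun g j r * g (u'+1) = g u' * dRun g j r :=
        zip g m hcomm hbraid (j - (u'+1)) j r u' (by omega) (by omega) (by omega) hm' hr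
      rw [hz, mul_assoc, ih (u'+1) j r (by omega) (by omega) hm' hr, ← mul_assoc]

lemma keyK (off k s w : ℕ) (hw : w ≤ k) (hm' : off + k + s + 1 < m) :
    dRun g (off+k+s) k * aCh g off (s+w+1) = aCh g off (s+w) * dRun g (off+k+s) (k+1) := by
  have e1 : aCh g off (s+(w+1)) = aCh g off s * aCh g (off+s) (w+1) := aCh_add g off s (w+1)
  rw [show s+w+1 = s+(w+1) from by omega, e1]
  rw [← mul_assoc, dRun_comm_aCh g hcomm (by omega), aCh_succ' g (off+s) w]
  have e2 : dRun g (off+k+s) k * g (off+s) = dRun g (off+k+s) (k+1) := by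
    rw [dRun_succ_bot]
    congr 2
    omega
  rw [mul_assoc, ← mul_assoc (dRun g (off+k+s) k), e2]
  have e3 : dRun g (off+k+s) (k+1) * aCh g (off+s+1) w = aCh g (off+s) w * dRun g (off+k+s) (k+1) :=
    zipChain g m hcomm hbraid w (off+s) (off+k+s) (k+1) (by omega) (by omega) (by omega) (by omega)
  rw [e3, ← mul_assoc, ← aCh_add]


lemma lemC (off q' : ℕ) (hm' : off + q' + 1 < m) :
    DInt g (off+q') (q'+1) * AInt g off (q'+2) = AInt g off (q'+1) * DInt g (off+q') (q'+2) := by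
  simp only [DInt, AInt, Finset.sum_mul_sum]
  rw [← Finset.sum_product', ← Finset.sum_product']
  apply Finset.sum_nbij'
    (i := fun p : ℕ × ℕ => if p.1 + p.2 ≤ q' then (p.2, p.1) else (p.2 - 1, p.1 + 1))
    (j := fun p : ℕ × ℕ => if p.1 + p.2 ≤ q' then (p.2, p.1) else (p.2 - 1, p.1 + 1))
  · rintro ⟨k, l⟩ hp
    simp only [Finset.mem_product, Finset.mem_range] at hp ⊢
    split_ifs <;> constructor <;> omega
  · rintro ⟨k, l⟩ hp
    simp only [Finset.mem_product, Finset.mem_range] at hp ⊢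
    split_ifs <;> constructor <;> omega
  · rintro ⟨k, l⟩ hp
    simp only [Finset.mem_product, Finset.mem_range] at hp
    by_cases hc : k + l ≤ q'
    · simp only [hc, if_pos, if_true]
      rw [if_pos (by omega)]
    · rw [if_neg hc, if_neg (by simp at hc ⊢; omega)]
      simp only
      ext <;> simp <;> omega
  · rintro ⟨k, l⟩ hp
    simp only [Finset.mem_product, Finset.mem_range] at hp
    by_cases hc : k + l ≤ q'
    · simp only [hc, if_pos, if_true]
      rw [if_pos (by omega)]
    · rw [if_neg hc, if_neg (by simp at hc ⊢; omega)]
      simp only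
      ext <;> simp <;> omega
  · rintro ⟨k, l⟩ hp
    simp only [Finset.mem_product, Finset.mem_range] at hp
    by_cases hc : k + l ≤ q'
    · rw [if_pos hc]
      simp only
      exact dRun_comm_aCh g hcomm (by omega)
    · rw [if_neg hc]
      simp only
      obtain ⟨s, rfl⟩ : ∃ s, q' = k + s := ⟨q' - k, by omega⟩
      obtain ⟨w, rfl⟩ : ∃ w, l = s + w + 1 := ⟨l - s - 1, by omega⟩
      have h1 : off + (k + s) = off + k + s := by omega
      have h2 : s + w + 1 - 1 = s + w := by omega
      rw [h1, h2]
      exact keyK g m hcomm hbraid off k s w (by omega) (by omega)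

lemma lemB : ∀ (p off : ℕ), off + p + 1 < m →
    Fdesc g (off+1) p * AInt g off (p+2) = Fdesc g off p * DInt g (off+p) (p+2) := by
  intro p
  induction p with
  | zero =>
      intro off _
      simp only [Fdesc, List.range_zero, List.map_nil, List.prod_nil, one_mul, Nat.add_zero]
      simp [AInt, DInt, Finset.sum_range_succ, aCh, dRun, List.range_succ]
  | succ p ih =>
      intro off hm'
      rw [Fdesc_succ g (off+1) p, mul_assoc]
      have hC := lemC g m hcomm hbraid off (p+1) (by omega)
      rw [show off+1+p = off+(p+1) from by omega, hC, ← mul_assoc, ih off (by omega),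
        Fdesc_succ g off p, mul_assoc]


lemma lemS : ∀ (p off : ℕ), off + p < m → Fasc g off p = Fdesc g off p := by
  intro p
  induction p with
  | zero => intro off _; simp [Fasc, Fdesc]
  | succ p ih =>
      intro off hm'
      rw [Fasc_succ, ih (off+1) (by omega), lemB g m hcomm hbraid p off (by omega),
        ← Fdesc_succ]

end zipsec
end Alg
section Phi
variable (σ : Fin n → Fin n)

def Phi (M : Matrix (Fin m → Fin n) (Fin m → Fin n) ℂ) :
    Matrix (Fin m → Fin n) (Fin m → Fin n) ℂ :=
  Matrix.of fun f g => conj (M (fun t => σ (f t.rev)) (fun t => σ (g t.rev)))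

variable (hσ : Function.Involutive σ)

/-- the reindexing equivalence -/
def emap : (Fin m → Fin n) ≃ (Fin m → Fin n) where
  toFun f := fun t => σ (f t.rev)
  invFun f := fun t => σ (f t.rev)
  left_inv f := by funext t; simp [Fin.rev_rev, hσ _]
  right_inv f := by funext t; simp [Fin.rev_rev, hσ _]

include hσ

lemma emap_inj : ∀ {f g : Fin m → Fin n},
    (fun t : Fin m => σ (f t.rev)) = (fun t : Fin m => σ (g t.rev)) → f = g := by
  intro f g h
  funext t
  have := congrFun h t.rev
  simp only [Fin.rev_rev] at this
  exact hσ.injective this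

lemma Phi_one : Phi (m := m) σ (1 : Matrix (Fin m → Fin n) (Fin m → Fin n) ℂ) = 1 := by
  ext f g
  simp only [Phi, Matrix.of_apply, Matrix.one_apply]
  rw [apply_ite conj, map_one, map_zero]
  refine if_congr ⟨fun h => emap_inj σ hσ h, fun h => by rw [h]⟩ rfl rfl

lemma Phi_mul (M N : Matrix (Fin m → Fin n) (Fin m → Fin n) ℂ) :
    Phi σ (M * N) = Phi σ M * Phi σ N := by
  ext f g
  simp only [Phi, Matrix.of_apply, Matrix.mul_apply, map_sum, map_mul]
  exact (Equiv.sum_comp (emap (m := m) σ hσ)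
    (fun h => conj (M (fun t => σ (f t.rev)) h) * conj (N h (fun t => σ (g t.rev))))).symm

lemma Phi_sum {ι : Type} (s : Finset ι) (F : ι → Matrix (Fin m → Fin n) (Fin m → Fin n) ℂ) :
    Phi σ (∑ r ∈ s, F r) = ∑ r ∈ s, Phi σ (F r) := by
  ext f g
  simp [Phi, Matrix.sum_apply]

variable {R : Fin n → Fin n → Fin n → Fin n → ℂ}

lemma Phi_site (hreal : RealTypeII n R σ) {k : ℕ} (hk2 : k + 2 ≤ m) :
    Phi σ (site n m (PRmat n R) k) = site n m (PRmat n R) (m-2-k) := by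
  have hk1 : k + 1 < m := by omega
  have hmk : (m-2-k) + 1 < m := by omega
  ext f g
  simp only [Phi, Matrix.of_apply]
  rw [site_apply _ hk1, site_apply _ hmk, map_mul, apply_ite conj, map_one, map_zero]
  have hrev1 : (⟨k, Nat.lt_of_succ_lt hk1⟩ : Fin m).rev = ⟨m-1-k, by omega⟩ := by
    simp [Fin.rev, Fin.ext_iff]; omega
  have hrev2 : (⟨k+1, hk1⟩ : Fin m).rev = ⟨m-2-k, by omega⟩ := by
    simp [Fin.rev, Fin.ext_iff]; omega
  congr 1
  · -- entries
    rw [hrev1, hrev2]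
    simp only [PRmat, Matrix.of_apply]
    rw [hreal]
    simp only [hσ _]
    have e1 : (⟨m-2-k+1, hmk⟩ : Fin m) = ⟨m-1-k, by omega⟩ := by
      simp [Fin.ext_iff]; omega
    rw [e1]
  · -- the ifs
    refine if_congr ?_ rfl rfl
    constructor
    · intro h t h1 h2
      have := h t.rev (by simp [Fin.val_rev]; omega) (by simp [Fin.val_rev]; omega)
      simp only [Fin.rev_rev] at this
      exact hσ.injective this
    · intro h t h1 h2
      have := h t.rev (by simp [Fin.val_rev]; omega) (by simp [Fin.val_rev]; omega)
      rw [this]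
end Phi

section Glue
variable {n m : ℕ} {R : Fin n → Fin n → Fin n → Fin n → ℂ}
variable {σ : Fin n → Fin n}

lemma Phi_aCh (hσ : Function.Involutive σ) (hreal : RealTypeII n R σ) :
    ∀ (r off : ℕ), off + r + 1 ≤ m →
      Phi σ (aCh (fun k => site n m (PRmat n R) k) off r)
        = dRun (fun k => site n m (PRmat n R) k) (m-2-off) r := by
  intro r
  induction r with
  | zero => intro off _; simp only [aCh_zero, dRun_zero]; exact Phi_one σ hσ
  | succ r ih =>
      intro off h
      rw [aCh_succ, Phi_mul σ hσ, ih off (by omega), dRun_succ_bot]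
      have hs := Phi_site (m := m) σ hσ hreal (k := off + r) (by omega)
      rw [hs, show m - 2 - (off + r) = m - 2 - off - r from by omega]

lemma Phi_AInt (hσ : Function.Involutive σ) (hreal : RealTypeII n R σ)
    {off k : ℕ} (h : off + k ≤ m) :
    Phi σ (AInt (fun k => site n m (PRmat n R) k) off k)
      = DInt (fun k => site n m (PRmat n R) k) (m-2-off) k := by
  rw [AInt, DInt, Phi_sum σ hσ]
  refine Finset.sum_congr rfl fun r hr => ?_
  exact Phi_aCh hσ hreal r off (by have := Finset.mem_range.mp hr; omega)

lemma Phi_Fasc (hσ : Function.Involutive σ) (hreal : RealTypeII n R σ) :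
    ∀ (p off : ℕ), off + p + 1 ≤ m →
      Phi σ (Fasc (fun k => site n m (PRmat n R) k) off p)
        = Fdesc (fun k => site n m (PRmat n R) k) (m-1-off-p) p := by
  intro p
  induction p with
  | zero =>
      intro off _
      simp only [Fasc, Fdesc, List.range_zero, List.map_nil, List.prod_nil]
      exact Phi_one σ hσ
  | succ p ih =>
      intro off h
      rw [Fasc_succ, Phi_mul σ hσ, ih (off+1) (by omega), Phi_AInt hσ hreal (by omega),
        Fdesc_succ]
      congr 2 <;> omega

end Glue

end S12

/-- if `R` obeys the QYBE and is of real type II w.r.t. an involution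
`σ`, then `conj(([m;R]!)^{j_1⋯j_m}_{i_1⋯i_m}) =
([m;R]!)^{σ(j_m)⋯σ(j_1)}_{σ(i_m)⋯σ(i_1)}` for every `m ≥ 1`. -/
theorem stmt12 (n : ℕ) (hn : 1 ≤ n)
    (R : Fin n → Fin n → Fin n → Fin n → ℂ) (hR : QYBE n R)
    (σ : Fin n → Fin n) (hσ : Function.Involutive σ)
    (hreal : RealTypeII n R σ)
    (m : ℕ) (hm : 1 ≤ m) (j i : Fin m → Fin n) :
    conj (braidedFact n m R j i) =
      braidedFact n m R (fun t => σ (j t.rev)) (fun t => σ (i t.rev)) := by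
  classical
  have hcomm : ∀ {a b : ℕ}, a + 2 ≤ b →
      site n m (PRmat n R) a * site n m (PRmat n R) b
        = site n m (PRmat n R) b * site n m (PRmat n R) a :=
    fun h => S12.site_comm _ _ h
  have hbraid : ∀ {k : ℕ}, k + 2 < m →
      site n m (PRmat n R) k * site n m (PRmat n R) (k+1) * site n m (PRmat n R) k
        = site n m (PRmat n R) (k+1) * site n m (PRmat n R) k * site n m (PRmat n R) (k+1) :=
    fun hk => S12.braid hR hk
  have hfact : braidedFact n m R
      = S12.Fasc (fun k => site n m (PRmat n R) k) 0 (m-1) := by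
    refine congrArg List.prod (List.map_congr_left fun t ht => ?_)
    have hidx : m - (t+2) = 0 + ((m-1) - (t+1)) := by omega
    rw [hidx]
    rfl
  have h1 : S12.Phi σ (braidedFact n m R) = braidedFact n m R := by
    rw [hfact, S12.Phi_Fasc hσ hreal (m-1) 0 (by omega)]
    rw [show m - 1 - 0 - (m-1) = 0 from by omega]
    exact (S12.lemS (fun k => site n m (PRmat n R) k) m hcomm hbraid (m-1) 0 (by omega)).symm
  have h2 := congrFun (congrFun h1 (fun t => σ (j t.rev))) (fun t => σ (i t.rev))
  have e1 : (fun t : Fin m => σ ((fun t : Fin m => σ (j t.rev)) t.rev)) = j := by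
    funext t; simp [Fin.rev_rev, hσ _]
  have e2 : (fun t : Fin m => σ ((fun t : Fin m => σ (i t.rev)) t.rev)) = i := by
    funext t; simp [Fin.rev_rev, hσ _]
  calc conj (braidedFact n m R j i)
      = S12.Phi σ (braidedFact n m R) (fun t => σ (j t.rev)) (fun t => σ (i t.rev)) := by
        simp only [S12.Phi, Matrix.of_apply]
        rw [e1, e2]
    _ = braidedFact n m R (fun t => σ (j t.rev)) (fun t => σ (i t.rev)) := h2
end
end

section
/- Let R be an n⁴ complex array obeying the quantum Yang–Baxter equation and of real type I. Then for every m ≥ 1 the braided factorial [m;R]! is a Hermitian matrix on (ℂⁿ)^{⊗m}: conj(([m;R]!)^{j_1⋯j_m}_{i_1⋯i_m}) = ([m;R]!)^{i_1⋯i_m}_{j_1⋯j_m} for all multi-indices. (This expresses that the duality pairing ⟨v^{j_m}⋯v^{j_1}, x_{i_1}⋯x_{i_m}⟩ = ([m;R]!)^{j_1⋯j_m}_{i_1⋯i_m} satisfies the holomorphic-structure condition conj⟨b,c⟩ = ⟨c*,b*⟩ under v^i ↦ x_i, x_i ↦ v^i.) -/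
open scoped ComplexConjugate

noncomputable section

namespace Stmt13Aux

open Matrix

variable (n m : ℕ) (A : Matrix (Fin n × Fin n) (Fin n × Fin n) ℂ)
variable (R : Fin n → Fin n → Fin n → Fin n → ℂ)

lemma site_apply (k : ℕ) (h : k + 1 < m) (f g : Fin m → Fin n) :
    site n m A k f g =
      A (f ⟨k, Nat.lt_of_succ_lt h⟩, f ⟨k + 1, h⟩)
        (g ⟨k, Nat.lt_of_succ_lt h⟩, g ⟨k + 1, h⟩) *
      ∏ t : Fin m,
        (if t.1 = k ∨ t.1 = k + 1 then (1 : ℂ) else if f t = g t then 1 else 0) := by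
  rw [site, dif_pos h]; rfl

lemma site_of_not_lt (k : ℕ) (h : ¬ k + 1 < m) : site n m A k = 1 := by
  rw [site, dif_neg h]

/-- Product of two sites at disjoint positions, entrywise. -/
lemma sum_site_site (k l : ℕ) (hk : k + 1 < m) (hl : l + 1 < m)
    (hd : ∀ t : ℕ, ¬((t = k ∨ t = k + 1) ∧ (t = l ∨ t = l + 1)))
    (f g : Fin m → Fin n) :
    (site n m A k * site n m A l) f g =
      A (f ⟨k, Nat.lt_of_succ_lt hk⟩, f ⟨k + 1, hk⟩)
        (g ⟨k, Nat.lt_of_succ_lt hk⟩, g ⟨k + 1, hk⟩) *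
      A (f ⟨l, Nat.lt_of_succ_lt hl⟩, f ⟨l + 1, hl⟩)
        (g ⟨l, Nat.lt_of_succ_lt hl⟩, g ⟨l + 1, hl⟩) *
      ∏ t : Fin m,
        (if (t.1 = k ∨ t.1 = k + 1) ∨ (t.1 = l ∨ t.1 = l + 1) then (1 : ℂ)
          else if f t = g t then 1 else 0) := by
  classical
  rw [Matrix.mul_apply]
  set h0 : Fin m → Fin n := fun t => if t.1 = k ∨ t.1 = k + 1 then g t else f t with hh0
  rw [Finset.sum_eq_single h0]
  · rw [site_apply n m A k hk, site_apply n m A l hl]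
    have e1 : h0 ⟨k, Nat.lt_of_succ_lt hk⟩ = g ⟨k, Nat.lt_of_succ_lt hk⟩ := if_pos (Or.inl rfl)
    have e2 : h0 ⟨k + 1, hk⟩ = g ⟨k + 1, hk⟩ := if_pos (Or.inr rfl)
    have e3 : h0 ⟨l, Nat.lt_of_succ_lt hl⟩ = f ⟨l, Nat.lt_of_succ_lt hl⟩ := by
      apply if_neg; intro hc; exact hd l ⟨hc, Or.inl rfl⟩
    have e4 : h0 ⟨l + 1, hl⟩ = f ⟨l + 1, hl⟩ := by
      apply if_neg; intro hc; exact hd (l + 1) ⟨hc, Or.inr rfl⟩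
    have P1 : (∏ t : Fin m,
        (if t.1 = k ∨ t.1 = k + 1 then (1 : ℂ) else if f t = h0 t then 1 else 0)) = 1 := by
      apply Finset.prod_eq_one
      intro t _
      by_cases hc : t.1 = k ∨ t.1 = k + 1
      · simp [hc]
      · have : h0 t = f t := if_neg hc
        simp [hc, this]
    have P2 : (∏ t : Fin m,
        (if t.1 = l ∨ t.1 = l + 1 then (1 : ℂ) else if h0 t = g t then 1 else 0)) =
        ∏ t : Fin m,
        (if (t.1 = k ∨ t.1 = k + 1) ∨ (t.1 = l ∨ t.1 = l + 1) then (1 : ℂ)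
          else if f t = g t then 1 else 0) := by
      apply Finset.prod_congr rfl
      intro t _
      by_cases hcl : t.1 = l ∨ t.1 = l + 1
      · simp [hcl]
      · by_cases hck : t.1 = k ∨ t.1 = k + 1
        · have : h0 t = g t := if_pos hck
          simp [hck, hcl, this]
        · have : h0 t = f t := if_neg hck
          simp [hck, hcl, this]
    rw [e1, e2, e3, e4, P1, P2]
    ring
  · intro b _ hb
    obtain ⟨t, ht⟩ : ∃ t, b t ≠ h0 t := Function.ne_iff.mp hb
    by_cases hc : t.1 = k ∨ t.1 = k + 1
    · have hbg : b t ≠ g t := by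
        intro h; apply ht; rw [h, hh0]; exact (if_pos hc).symm
      have : site n m A l b g = 0 := by
        rw [site_apply n m A l hl]
        have : (∏ s : Fin m,
            (if s.1 = l ∨ s.1 = l + 1 then (1 : ℂ) else if b s = g s then 1 else 0)) = 0 := by
          apply Finset.prod_eq_zero (Finset.mem_univ t)
          have hcl : ¬(t.1 = l ∨ t.1 = l + 1) := fun h => hd t.1 ⟨hc, h⟩
          simp [hcl, hbg]
        rw [this, mul_zero]
      rw [this, mul_zero]
    · have hbf : f t ≠ b t := by
        intro h; apply ht; rw [← h, hh0]; exact (if_neg hc).symm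
      have : site n m A k f b = 0 := by
        rw [site_apply n m A k hk]
        have : (∏ s : Fin m,
            (if s.1 = k ∨ s.1 = k + 1 then (1 : ℂ) else if f s = b s then 1 else 0)) = 0 := by
          apply Finset.prod_eq_zero (Finset.mem_univ t)
          simp [hc, hbf]
        rw [this, mul_zero]
      rw [this, zero_mul]
  · intro h; exact absurd (Finset.mem_univ h0) h

/-- Distant sites commute. -/
lemma site_comm (k l : ℕ) (hsep : k + 2 ≤ l) :
    Commute (site n m A k) (site n m A l) := by
  by_cases hk : k + 1 < m
  · by_cases hl : l + 1 < m
    · have hd : ∀ t : ℕ, ¬((t = k ∨ t = k + 1) ∧ (t = l ∨ t = l + 1)) := by omega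
      have hd' : ∀ t : ℕ, ¬((t = l ∨ t = l + 1) ∧ (t = k ∨ t = k + 1)) := by omega
      show _ = _
      ext f g
      rw [sum_site_site n m A k l hk hl hd f g, sum_site_site n m A l k hl hk hd' f g]
      have : (∏ t : Fin m,
          (if (t.1 = l ∨ t.1 = l + 1) ∨ (t.1 = k ∨ t.1 = k + 1) then (1 : ℂ)
            else if f t = g t then 1 else 0)) =
          ∏ t : Fin m,
          (if (t.1 = k ∨ t.1 = k + 1) ∨ (t.1 = l ∨ t.1 = l + 1) then (1 : ℂ)
            else if f t = g t then 1 else 0) := by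
        apply Finset.prod_congr rfl
        intro t _
        apply if_congr (by tauto) rfl rfl
      rw [this]; ring
    · rw [site_of_not_lt n m A l hl]; exact Commute.one_right _
  · rw [site_of_not_lt n m A k hk]; exact Commute.one_left _

lemma chain_zero (off : ℕ) : chain n m A off 0 = 1 := by simp [chain]

lemma chain_succ (off r : ℕ) :
    chain n m A off (r + 1) = site n m A off * chain n m A (off + 1) r := by
  rw [chain, chain, List.range_succ_eq_map, List.map_cons, List.prod_cons, List.map_map,
    Nat.add_zero]
  congr 1
  congr 1
  apply List.map_congr_left
  intro s _
  show site n m A (off + (s + 1)) = site n m A (off + 1 + s)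
  rw [show off + (s + 1) = off + 1 + s from by omega]

lemma chainOp_zero (off : ℕ) : chainOp n m A off 0 = 1 := by simp [chainOp]

lemma chainOp_succ (off r : ℕ) :
    chainOp n m A off (r + 1) = chainOp n m A (off + 1) r * site n m A off := by
  rw [chainOp, chainOp, List.range_succ_eq_map, List.reverse_cons, List.map_append,
    List.prod_append]
  simp only [List.map_cons, List.map_nil, List.prod_cons, List.prod_nil, mul_one, Nat.add_zero]
  congr 1
  rw [← List.map_reverse, List.map_map]
  congr 1
  apply List.map_congr_left
  intro s _
  show site n m A (off + (s + 1)) = site n m A (off + 1 + s)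
  rw [show off + (s + 1) = off + 1 + s from by omega]

lemma braidedInt_succ (off k : ℕ) :
    braidedInt n m R off (k + 1) =
      1 + site n m (PRmat n R) off * braidedInt n m R (off + 1) k := by
  rw [braidedInt, Finset.sum_range_succ']
  rw [chain_zero]
  have : ∀ r, chain n m (PRmat n R) off (r + 1) =
      site n m (PRmat n R) off * chain n m (PRmat n R) (off + 1) r :=
    fun r => chain_succ n m _ off r
  simp only [this]
  rw [← Finset.mul_sum, braidedInt, add_comm]

lemma braidedIntOp_succ (off k : ℕ) :
    braidedIntOp n m R off (k + 1) =
      1 + braidedIntOp n m R (off + 1) k * site n m (PRmat n R) off := by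
  rw [braidedIntOp, Finset.sum_range_succ']
  rw [chainOp_zero]
  have : ∀ r, chainOp n m (PRmat n R) off (r + 1) =
      chainOp n m (PRmat n R) (off + 1) r * site n m (PRmat n R) off :=
    fun r => chainOp_succ n m _ off r
  simp only [this]
  rw [← Finset.sum_mul, braidedIntOp, add_comm]

lemma braidedInt_one (off : ℕ) : braidedInt n m R off 1 = 1 := by
  simp [braidedInt, chain_zero]

lemma braidedIntOp_one (off : ℕ) : braidedIntOp n m R off 1 = 1 := by
  simp [braidedIntOp, chainOp_zero]

/-- The braided factorial with a general offset, defined recursively. -/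
def Fct (n m : ℕ) (R : Fin n → Fin n → Fin n → Fin n → ℂ) :
    ℕ → ℕ → Matrix (Fin m → Fin n) (Fin m → Fin n) ℂ
  | _, 0 => 1
  | _, 1 => 1
  | off, (k + 2) => Fct n m R (off + 1) (k + 1) * braidedInt n m R off (k + 2)

/-- The opposite braided factorial with a general offset. -/
def FctOp (n m : ℕ) (R : Fin n → Fin n → Fin n → Fin n → ℂ) :
    ℕ → ℕ → Matrix (Fin m → Fin n) (Fin m → Fin n) ℂ
  | _, 0 => 1
  | _, 1 => 1
  | off, (k + 2) => braidedIntOp n m R off (k + 2) * FctOp n m R (off + 1) (k + 1)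

lemma comm_site_chain (j off r : ℕ) (h : j + 2 ≤ off) :
    Commute (site n m (PRmat n R) j) (chain n m (PRmat n R) off r) := by
  apply Commute.list_prod_right
  intro x hx
  obtain ⟨s, _, rfl⟩ := List.mem_map.mp hx
  exact site_comm n m _ j (off + s) (by omega)

lemma comm_site_braidedInt (j off k : ℕ) (h : j + 2 ≤ off) :
    Commute (site n m (PRmat n R) j) (braidedInt n m R off k) := by
  apply Commute.sum_right
  intro r _
  exact comm_site_chain n m R j off r h

lemma comm_site_Fct (k : ℕ) : ∀ j off, j + 2 ≤ off →
    Commute (site n m (PRmat n R) j) (Fct n m R off k) := by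
  induction k using Nat.strong_induction_on with
  | _ k ih =>
    match k with
    | 0 => intro j off h; exact Commute.one_right _
    | 1 => intro j off h; exact Commute.one_right _
    | (k + 2) =>
      intro j off h
      rw [Fct]
      exact Commute.mul_right (ih (k + 1) (by omega) j (off + 1) (by omega))
        (comm_site_braidedInt n m R j off (k + 2) h)

/-- The key exchange lemma, proved by induction using only distant-site commutation. -/
lemma key (k : ℕ) : ∀ off,
    braidedIntOp n m R off (k + 1) * Fct n m R (off + 1) k =
      Fct n m R (off + 1) k * braidedInt n m R off (k + 1) := by
  induction k using Nat.strong_induction_on with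
  | _ k ih =>
    match k with
    | 0 =>
      intro off
      rw [Fct, one_mul, mul_one, braidedInt_one, braidedIntOp_one]
    | 1 =>
      intro off
      rw [Fct, one_mul, mul_one, braidedInt_succ, braidedIntOp_succ,
        braidedInt_one, braidedIntOp_one, one_mul, mul_one]
    | (k + 2) =>
      intro off
      set g := site n m (PRmat n R) off with hg
      set F' := Fct n m R (off + 2) (k + 1) with hF'
      set S' := braidedInt n m R (off + 1) (k + 2) with hS'
      set Bop := braidedIntOp n m R (off + 1) (k + 2) with hBop
      have hFct : Fct n m R (off + 1) (k + 2) = F' * S' := by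
        rw [Fct]
      have hcomm : g * F' = F' * g :=
        (comm_site_Fct n m R (k + 1) off (off + 2) (by omega)).eq
      have hih : Bop * F' = F' * S' := ih (k + 1) (by omega) (off + 1)
      calc braidedIntOp n m R off (k + 3) * Fct n m R (off + 1) (k + 2)
          = (1 + Bop * g) * (F' * S') := by
            rw [braidedIntOp_succ, hFct]
        _ = F' * S' + Bop * g * (F' * S') := by rw [add_mul, one_mul]
        _ = F' * S' + (Bop * F') * (g * S') := by
            rw [mul_assoc Bop g (F' * S'), ← mul_assoc g F' S', hcomm, mul_assoc F' g S',
              ← mul_assoc Bop F' (g * S')]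
        _ = F' * S' + (F' * S') * (g * S') := by rw [hih]
        _ = (F' * S') * (1 + g * S') := by rw [mul_add, mul_one]
        _ = Fct n m R (off + 1) (k + 2) * braidedInt n m R off (k + 3) := by
            rw [braidedInt_succ, hFct]

lemma fctOp_eq_fct (k : ℕ) : ∀ off, FctOp n m R off k = Fct n m R off k := by
  induction k using Nat.strong_induction_on with
  | _ k ih =>
    match k with
    | 0 => intro off; rw [FctOp, Fct]
    | 1 => intro off; rw [FctOp, Fct]
    | (k + 2) =>
      intro off
      rw [FctOp, Fct, ih (k + 1) (by omega), key n m R (k + 1)]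

lemma fact_eq (k : ℕ) : ∀ off,
    ((List.range k).map fun t => braidedInt n m R (off + (k - 1 - t)) (t + 2)).prod =
      Fct n m R off (k + 1) := by
  induction k with
  | zero => intro off; simp [Fct]
  | succ k ih =>
    intro off
    rw [List.range_succ, List.map_append, List.prod_append]
    have h1 : ((List.range k).map fun t => braidedInt n m R (off + (k + 1 - 1 - t)) (t + 2)) =
        (List.range k).map fun t => braidedInt n m R ((off + 1) + (k - 1 - t)) (t + 2) := by
      apply List.map_congr_left
      intro t ht
      have ht' := List.mem_range.mp ht
      rw [show off + (k + 1 - 1 - t) = off + 1 + (k - 1 - t) from by omega]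
    rw [h1, ih (off + 1)]
    simp only [List.map_cons, List.map_nil, List.prod_cons, List.prod_nil, mul_one]
    have e : off + (k + 1 - 1 - k) = off := by omega
    rw [e, Fct]

lemma factOp_eq (k : ℕ) : ∀ off,
    (((List.range k).reverse).map fun t =>
        braidedIntOp n m R (off + (k - 1 - t)) (t + 2)).prod =
      FctOp n m R off (k + 1) := by
  induction k with
  | zero => intro off; simp [FctOp]
  | succ k ih =>
    intro off
    rw [List.range_succ, List.reverse_append]
    simp only [List.reverse_singleton, List.singleton_append, List.map_cons, List.prod_cons]
    have h1 : ((List.range k).reverse.map fun t =>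
          braidedIntOp n m R (off + (k + 1 - 1 - t)) (t + 2)) =
        (List.range k).reverse.map fun t =>
          braidedIntOp n m R ((off + 1) + (k - 1 - t)) (t + 2) := by
      apply List.map_congr_left
      intro t ht
      have ht' := List.mem_range.mp (List.mem_reverse.mp ht)
      rw [show off + (k + 1 - 1 - t) = off + 1 + (k - 1 - t) from by omega]
    have e : off + (k + 1 - 1 - k) = off := by omega
    rw [e, h1, ih (off + 1), FctOp]

lemma braidedFact_eq_Fct (hm : 1 ≤ m) : braidedFact n m R = Fct n m R 0 m := by
  cases m with
  | zero => omega
  | succ k =>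
    rw [braidedFact]
    have h1 : ((List.range (k + 1 - 1)).map fun t =>
          braidedInt n (k + 1) R (k + 1 - (t + 2)) (t + 2)) =
        (List.range k).map fun t => braidedInt n (k + 1) R (0 + (k - 1 - t)) (t + 2) := by
      simp only [Nat.add_sub_cancel]
      apply List.map_congr_left
      intro t ht
      have ht' := List.mem_range.mp ht
      rw [show k + 1 - (t + 2) = 0 + (k - 1 - t) from by omega]
    rw [h1, fact_eq]

lemma braidedFactOp_eq_FctOp (hm : 1 ≤ m) : braidedFactOp n m R = FctOp n m R 0 m := by
  cases m with
  | zero => omega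
  | succ k =>
    rw [braidedFactOp]
    have h1 : ((List.range (k + 1 - 1)).reverse.map fun t =>
          braidedIntOp n (k + 1) R (k + 1 - (t + 2)) (t + 2)) =
        (List.range k).reverse.map fun t => braidedIntOp n (k + 1) R (0 + (k - 1 - t)) (t + 2) := by
      simp only [Nat.add_sub_cancel]
      apply List.map_congr_left
      intro t ht
      have ht' := List.mem_range.mp (List.mem_reverse.mp ht)
      rw [show k + 1 - (t + 2) = 0 + (k - 1 - t) from by omega]
    rw [h1, factOp_eq]

lemma braidedFactOp_eq_braidedFact (hm : 1 ≤ m) :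
    braidedFactOp n m R = braidedFact n m R := by
  rw [braidedFactOp_eq_FctOp n m R hm, braidedFact_eq_Fct n m R hm, fctOp_eq_fct]

/-! ### Hermiticity -/

lemma site_conjTranspose (hA : ∀ p q, conj (A p q) = A q p) (k : ℕ) :
    (site n m A k)ᴴ = site n m A k := by
  ext f g
  rw [Matrix.conjTranspose_apply, ← starRingEnd_apply]
  by_cases h : k + 1 < m
  · rw [site_apply n m A k h g f, site_apply n m A k h f g, _root_.map_mul, hA]
    congr 1
    rw [map_prod]
    apply Finset.prod_congr rfl
    intro t _
    by_cases hc : t.1 = k ∨ t.1 = k + 1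
    · rw [if_pos hc, if_pos hc, _root_.map_one]
    · by_cases he : f t = g t
      · rw [if_neg hc, if_neg hc, if_pos he, if_pos he.symm, _root_.map_one]
      · have he' : ¬g t = f t := fun h' => he h'.symm
        rw [if_neg hc, if_neg hc, if_neg he, if_neg he', _root_.map_zero]
  · rw [site_of_not_lt n m A k h]
    by_cases he : f = g
    · subst he; simp [Matrix.one_apply]
    · have he' : ¬g = f := fun h' => he h'.symm
      simp [Matrix.one_apply, he, he']

lemma PRmat_herm (hreal : RealTypeI n R) :
    ∀ p q, conj (PRmat n R p q) = PRmat n R q p := by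
  intro p q
  exact hreal p.2 q.1 p.1 q.2

lemma chain_conjTranspose (hA : ∀ p q, conj (A p q) = A q p) (off r : ℕ) :
    (chain n m A off r)ᴴ = chainOp n m A off r := by
  rw [chain, chainOp, Matrix.conjTranspose_list_prod, List.map_map, ← List.map_reverse]
  congr 1
  apply List.map_congr_left
  intro s _
  exact site_conjTranspose n m A hA (off + s)

lemma braidedInt_conjTranspose (hreal : RealTypeI n R) (off k : ℕ) :
    (braidedInt n m R off k)ᴴ = braidedIntOp n m R off k := by
  rw [braidedInt, braidedIntOp, Matrix.conjTranspose_sum]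
  apply Finset.sum_congr rfl
  intro r _
  exact chain_conjTranspose n m _ (PRmat_herm n R hreal) off r

lemma braidedFact_conjTranspose (hreal : RealTypeI n R) :
    (braidedFact n m R)ᴴ = braidedFactOp n m R := by
  rw [braidedFact, braidedFactOp, Matrix.conjTranspose_list_prod, List.map_map,
    ← List.map_reverse]
  congr 1
  apply List.map_congr_left
  intro t _
  exact braidedInt_conjTranspose n m R hreal _ _

end Stmt13Aux


/-- if `R` obeys the QYBE and is of real type I, then for every
`m ≥ 1` the braided factorial `[m;R]!` is Hermitian:
`conj(([m;R]!)^{j_1⋯j_m}_{i_1⋯i_m}) = ([m;R]!)^{i_1⋯i_m}_{j_1⋯j_m}`. -/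
theorem stmt13 (n : ℕ) (hn : 1 ≤ n)
    (R : Fin n → Fin n → Fin n → Fin n → ℂ) (hR : QYBE n R)
    (hreal : RealTypeI n R)
    (m : ℕ) (hm : 1 ≤ m) (j i : Fin m → Fin n) :
    conj (braidedFact n m R j i) = braidedFact n m R i j := by
  have h1 : Matrix.conjTranspose (braidedFact n m R) = braidedFact n m R := by
    rw [Stmt13Aux.braidedFact_conjTranspose n m R hreal,
      Stmt13Aux.braidedFactOp_eq_braidedFact n m R hm]
  conv_rhs => rw [← h1]
  rw [Matrix.conjTranspose_apply]
  exact starRingEnd_apply _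
end
end

section
/- Let R be an n⁴ complex array and η an invertible n×n matrix that is R-covariant. Then for every m ≥ 1 and all multi-indices, Σ_{b_1,…,b_m} ([m;R])^{a_1⋯a_m}_{b_1⋯b_m} η^{b_1 i_1} ⋯ η^{b_m i_m} = Σ_{b_1,…,b_m} η^{a_1 b_1} ⋯ η^{a_m b_m} ([m;R₂₁]^{op})^{i_1⋯i_m}_{b_1⋯b_m}. -/
open scoped ComplexConjugate

noncomputable section

open scoped Matrix

namespace Stmt14Aux

/-- The m-fold tensor product of `η`. -/
def Emat (n m : ℕ) (η : Matrix (Fin n) (Fin n) ℂ) :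
    Matrix (Fin m → Fin n) (Fin m → Fin n) ℂ :=
  Matrix.of fun f g => ∏ t : Fin m, η (f t) (g t)

lemma collapse {n m : ℕ} (k : ℕ) (h : k + 1 < m) (f : Fin m → Fin n)
    (C : Fin m → Fin n → ℂ) (F : Fin n → Fin n → ℂ) :
    (∑ b : Fin m → Fin n,
      (F (b ⟨k, Nat.lt_of_succ_lt h⟩) (b ⟨k + 1, h⟩) *
        ∏ t : Fin m,
          (if t.1 = k ∨ t.1 = k + 1 then (1 : ℂ) else if f t = b t then 1 else 0)) *
      ∏ t : Fin m, C t (b t)) =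
    (∑ x : Fin n, ∑ y : Fin n,
        F x y * C ⟨k, Nat.lt_of_succ_lt h⟩ x * C ⟨k + 1, h⟩ y) *
      ∏ t ∈ Finset.univ \ {(⟨k, Nat.lt_of_succ_lt h⟩ : Fin m), ⟨k + 1, h⟩},
        C t (f t) := by
  set kk : Fin m := ⟨k, Nat.lt_of_succ_lt h⟩ with hkk
  set kk1 : Fin m := ⟨k + 1, h⟩ with hkk1
  have hne : kk ≠ kk1 := by simp [hkk, hkk1, Fin.ext_iff]
  set φ : Fin n × Fin n → (Fin m → Fin n) :=
    fun p => Function.update (Function.update f kk p.1) kk1 p.2 with hφ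
  have hφ1 : ∀ p, φ p kk = p.1 := by
    intro p; simp [hφ, Function.update_of_ne hne]
  have hφ2 : ∀ p, φ p kk1 = p.2 := by intro p; simp [hφ]
  have hφo : ∀ p (t : Fin m), t ≠ kk → t ≠ kk1 → φ p t = f t := by
    intro p t h1 h2
    simp [hφ, Function.update_of_ne h2, Function.update_of_ne h1]
  have hinj : Function.Injective φ := by
    intro p q hpq
    have e1 := congrFun hpq kk
    have e2 := congrFun hpq kk1
    rw [hφ1, hφ1] at e1; rw [hφ2, hφ2] at e2
    exact Prod.ext e1 e2
  have hzero : ∀ b : Fin m → Fin n, b ∉ Finset.univ.image φ →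
      (F (b kk) (b kk1) *
        ∏ t : Fin m,
          (if t.1 = k ∨ t.1 = k + 1 then (1 : ℂ) else if f t = b t then 1 else 0)) *
      ∏ t : Fin m, C t (b t) = 0 := by
    intro b hb
    have hex : ∃ t : Fin m, t ≠ kk ∧ t ≠ kk1 ∧ f t ≠ b t := by
      by_contra hc
      push_neg at hc
      apply hb
      refine Finset.mem_image.2 ⟨(b kk, b kk1), Finset.mem_univ _, ?_⟩
      funext t
      by_cases h1 : t = kk
      · subst h1; exact hφ1 _
      by_cases h2 : t = kk1
      · subst h2; exact hφ2 _
      · rw [hφo _ t h1 h2]; exact hc t h1 h2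
    obtain ⟨t, h1, h2, h3⟩ := hex
    have ht1 : ¬ (t.1 = k ∨ t.1 = k + 1) := by
      rintro (hh | hh)
      · exact h1 (Fin.ext hh)
      · exact h2 (Fin.ext hh)
    have hz : (∏ t : Fin m,
        (if t.1 = k ∨ t.1 = k + 1 then (1 : ℂ) else if f t = b t then 1 else 0)) = 0 :=
      Finset.prod_eq_zero (Finset.mem_univ t) (by rw [if_neg ht1, if_neg h3])
    rw [hz, mul_zero, zero_mul]
  rw [← Finset.sum_subset (Finset.subset_univ (Finset.univ.image φ))
      (fun b _ hb => hzero b hb)]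
  rw [Finset.sum_image (fun p _ q _ hpq => hinj hpq)]
  have hterm : ∀ p : Fin n × Fin n,
      (F (φ p kk) (φ p kk1) *
        ∏ t : Fin m,
          (if t.1 = k ∨ t.1 = k + 1 then (1 : ℂ) else if f t = φ p t then 1 else 0)) *
      ∏ t : Fin m, C t (φ p t) =
      F p.1 p.2 * C kk p.1 * C kk1 p.2 *
        ∏ t ∈ Finset.univ \ {kk, kk1}, C t (f t) := by
    intro p
    have hd : (∏ t : Fin m,
        (if t.1 = k ∨ t.1 = k + 1 then (1 : ℂ) else if f t = φ p t then 1 else 0)) = 1 := by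
      apply Finset.prod_eq_one
      intro t _
      by_cases ht : t.1 = k ∨ t.1 = k + 1
      · rw [if_pos ht]
      · have h1 : t ≠ kk := fun e => ht (Or.inl (by rw [e]))
        have h2 : t ≠ kk1 := fun e => ht (Or.inr (by rw [e]))
        rw [if_neg ht, hφo p t h1 h2, if_pos rfl]
    have hp : (∏ t : Fin m, C t (φ p t)) =
        (∏ t ∈ Finset.univ \ {kk, kk1}, C t (f t)) * (C kk p.1 * C kk1 p.2) := by
      rw [← Finset.prod_sdiff (Finset.subset_univ ({kk, kk1} : Finset (Fin m)))]
      congr 1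
      · refine Finset.prod_congr rfl fun t ht => ?_
        simp only [Finset.mem_sdiff, Finset.mem_insert, Finset.mem_singleton, not_or] at ht
        rw [hφo p t ht.2.1 ht.2.2]
      · rw [Finset.prod_pair hne, hφ1, hφ2]
    rw [hφ1, hφ2, hd, mul_one, hp]; ring
  rw [Finset.sum_congr rfl fun p _ => hterm p]
  rw [Fintype.sum_prod_type, Finset.sum_mul]
  exact Finset.sum_congr rfl fun x _ => by rw [Finset.sum_mul]

lemma twosite {n : ℕ} (R : Fin n → Fin n → Fin n → Fin n → ℂ)
    (η : Matrix (Fin n) (Fin n) ℂ) (hcov : MetricCovariant n R η)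
    (p q r s : Fin n) :
    (∑ x : Fin n, ∑ y : Fin n, PRmat n R (p, q) (x, y) * η x r * η y s) =
    ∑ x : Fin n, ∑ y : Fin n, PRmat n (swapR n R) (r, s) (x, y) * η p x * η q y := by
  simp only [PRmat, swapR, Matrix.of_apply]
  rw [← hcov q p r s, Finset.sum_comm]
  exact Finset.sum_congr rfl fun x _ => Finset.sum_congr rfl fun y _ => by ring

lemma site_comm {n m : ℕ} (R : Fin n → Fin n → Fin n → Fin n → ℂ)
    (η : Matrix (Fin n) (Fin n) ℂ) (hcov : MetricCovariant n R η) (k : ℕ) :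
    site n m (PRmat n R) k * Emat n m η =
      Emat n m η * (site n m (PRmat n (swapR n R)) k)ᵀ := by
  by_cases h : k + 1 < m
  · ext f g
    rw [Matrix.mul_apply, Matrix.mul_apply]
    simp only [site, dif_pos h, Matrix.transpose_apply, Emat, Matrix.of_apply]
    have hL := collapse (m := m) k h f (fun t x => η x (g t))
      (fun x y => PRmat n R (f ⟨k, Nat.lt_of_succ_lt h⟩, f ⟨k + 1, h⟩) (x, y))
    have hR := collapse (m := m) k h g (fun t x => η (f t) x)
      (fun x y => PRmat n (swapR n R) (g ⟨k, Nat.lt_of_succ_lt h⟩, g ⟨k + 1, h⟩) (x, y))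
    have hswap : (∑ b : Fin m → Fin n, (∏ t : Fin m, η (f t) (b t)) *
        (PRmat n (swapR n R) (g ⟨k, Nat.lt_of_succ_lt h⟩, g ⟨k + 1, h⟩)
            (b ⟨k, Nat.lt_of_succ_lt h⟩, b ⟨k + 1, h⟩) *
          ∏ t : Fin m,
            if (t : ℕ) = k ∨ (t : ℕ) = k + 1 then (1 : ℂ)
            else if g t = b t then 1 else 0)) =
        ∑ b : Fin m → Fin n,
          (PRmat n (swapR n R) (g ⟨k, Nat.lt_of_succ_lt h⟩, g ⟨k + 1, h⟩)
            (b ⟨k, Nat.lt_of_succ_lt h⟩, b ⟨k + 1, h⟩) *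
          ∏ t : Fin m,
            if (t : ℕ) = k ∨ (t : ℕ) = k + 1 then (1 : ℂ)
            else if g t = b t then 1 else 0) * ∏ t : Fin m, η (f t) (b t) :=
      Finset.sum_congr rfl fun b _ => mul_comm _ _
    rw [hL, hswap, hR]
    congr 1
    exact twosite R η hcov _ _ _ _
  · simp [site, h]

lemma chain_comm {n m : ℕ} (R : Fin n → Fin n → Fin n → Fin n → ℂ)
    (η : Matrix (Fin n) (Fin n) ℂ) (hcov : MetricCovariant n R η) (r : ℕ) :
    chain n m (PRmat n R) 0 r * Emat n m η =
      Emat n m η * (chainOp n m (PRmat n (swapR n R)) 0 r)ᵀ := by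
  induction r with
  | zero => simp [chain, chainOp]
  | succ r ih =>
    have hc : chain n m (PRmat n R) 0 (r + 1) =
        chain n m (PRmat n R) 0 r * site n m (PRmat n R) r := by
      simp [chain, List.range_succ]
    have hco : chainOp n m (PRmat n (swapR n R)) 0 (r + 1) =
        site n m (PRmat n (swapR n R)) r * chainOp n m (PRmat n (swapR n R)) 0 r := by
      simp [chainOp, List.range_succ]
    rw [hc, mul_assoc, site_comm R η hcov r, ← mul_assoc, ih, hco,
      Matrix.transpose_mul, mul_assoc]

end Stmt14Aux

/-- if `η` is invertible and `R`-covariant, then for every `m ≥ 1`,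
`Σ_b ([m;R])^{a}_{b} η^{b_1 i_1}⋯η^{b_m i_m}
 = Σ_b η^{a_1 b_1}⋯η^{a_m b_m} ([m;R₂₁]^{op})^{i}_{b}`. -/
theorem stmt14 (n : ℕ) (hn : 1 ≤ n)
    (R : Fin n → Fin n → Fin n → Fin n → ℂ)
    (η : Matrix (Fin n) (Fin n) ℂ) (hη : IsUnit η)
    (hcov : MetricCovariant n R η)
    (m : ℕ) (hm : 1 ≤ m) (a i : Fin m → Fin n) :
    (∑ b : Fin m → Fin n,
      braidedInt n m R 0 m a b * ∏ t : Fin m, η (b t) (i t)) =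
    ∑ b : Fin m → Fin n,
      (∏ t : Fin m, η (a t) (b t)) * braidedIntOp n m (swapR n R) 0 m i b := by
  open Stmt14Aux in
  have key : braidedInt n m R 0 m * Emat n m η =
      Emat n m η * (braidedIntOp n m (swapR n R) 0 m)ᵀ := by
    unfold braidedInt braidedIntOp
    rw [Matrix.sum_mul, Matrix.transpose_sum, Matrix.mul_sum]
    exact Finset.sum_congr rfl fun r _ => chain_comm R η hcov r
  have h1 : (∑ b : Fin m → Fin n,
      braidedInt n m R 0 m a b * ∏ t : Fin m, η (b t) (i t)) =
      (braidedInt n m R 0 m * Emat n m η) a i := by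
    simp [Emat, Matrix.mul_apply]
  have h2 : (∑ b : Fin m → Fin n,
      (∏ t : Fin m, η (a t) (b t)) * braidedIntOp n m (swapR n R) 0 m i b) =
      (Emat n m η * (braidedIntOp n m (swapR n R) 0 m)ᵀ) a i := by
    simp [Emat, Matrix.mul_apply]
  rw [h1, h2, key]
end
end
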